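/- arXiv:2603.30011 — 5 statements merged into one kernel-verified Lean document; each statement's English description precedes it below -/
import Mathlib

section
/- Let f be a C¹ vector field on ℝⁿ generating a complete flow φ : ℝ × ℝⁿ → ℝⁿ, let X ⊂ ℝⁿ be a compact invariant set of the flow, let δ > 0, and let H be an affine hyperplane of ℝⁿ such that every point of the δ-local basin of attraction B_δ(X) reaches H in finite forward time, i.e. for every x ∈ B_δ(X) there exists τ ≥ 0 with φ(τ, x) ∈ H. If the n-dimensional Lebesgue measure of B_δ(X) is positive, then the (n−1)-dimensional Lebesgue measure of H ∩ B_δ(X) (computed in H) is positive. -/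
/-!
Suppose the slice `H ∩ B` were `μH[N - 1]`-null. Since `B` is forward invariant and each of its
points reaches `H`, `B` lies in the image of `[0, ∞) × (H ∩ B)` under the backward flow
`(t, y) ↦ φ (-t) y`. The product of an interval with a `μH[d]`-null set is `μH[d + 1]`-null, and
the backward flow is Lipschitz on the pieces where `t` and the orbit segment stay bounded
(Grönwall in `y`, bounded velocity in `t`). So `B` would be `μH[N]`-null, hence Lebesgue-null.
-/

open MeasureTheory

/-- The `δ`-local basin of attraction of a compact invariant set `X` of the flow `φ`:
points whose forward orbit stays within distance `δ` of `X` and is attracted to `X`. -/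
def deltaLocalBasin {N : ℕ}
    (φ : ℝ → EuclideanSpace ℝ (Fin N) → EuclideanSpace ℝ (Fin N))
    (X : Set (EuclideanSpace ℝ (Fin N))) (δ : ℝ) : Set (EuclideanSpace ℝ (Fin N)) :=
  {x | (∀ τ : ℝ, 0 ≤ τ → Metric.infDist (φ τ x) X < δ) ∧
    Filter.Tendsto (fun τ : ℝ => Metric.infDist (φ τ x) X) Filter.atTop (nhds 0)}

open Set Filter Metric Measure
open scoped ENNReal NNReal Topology

theorem ediam_prod_le {α β : Type*} [PseudoEMetricSpace α] [PseudoEMetricSpace β]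
    (s : Set α) (t : Set β) : ediam (s ×ˢ t) ≤ max (ediam s) (ediam t) :=
  ediam_le fun p hp q hq => by
    rw [Prod.edist_eq]
    exact max_le_max (edist_le_ediam_of_mem hp.1 hq.1) (edist_le_ediam_of_mem hp.2 hq.2)

theorem exists_cover_Icc_prod {Y : Type*} [PseudoEMetricSpace Y] (T : ℝ≥0) {ρ : ℝ≥0}
    (hρ : 0 < ρ) (hρ1 : ρ ≤ 1) {t : Set Y} (ht : ediam t ≤ ρ) {d : ℝ} (hd : 0 ≤ d) :
    ∃ P : ℕ → Set (ℝ × Y), Icc 0 (T : ℝ) ×ˢ t ⊆ ⋃ k, P k ∧ (∀ k, ediam (P k) ≤ ρ) ∧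
      ∑' k, ediam (P k) ^ (d + 1) ≤ (T + 1) * (ρ : ℝ≥0∞) ^ d := by
  set P : ℕ → Set (ℝ × Y) := fun k => (Icc (k * ρ : ℝ) ((k + 1) * ρ) ∩ Icc 0 (T : ℝ)) ×ˢ t
  have hdiam : ∀ k, ediam (P k) ≤ ρ := fun k => by
    refine (ediam_prod_le _ _).trans (max_le ((ediam_mono inter_subset_left).trans ?_) ht)
    rw [Real.ediam_Icc, ← ENNReal.ofReal_coe_nnreal]
    exact ENNReal.ofReal_le_ofReal (le_of_eq (by ring))
  set K := ⌊T / ρ⌋₊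
  have hK : ∀ k ∉ Finset.range (K + 1), ediam (P k) ^ (d + 1) = 0 := fun k hk => by
    have hTk : (T : ℝ) < k * ρ := by
      have : T / ρ < k := Nat.floor_lt zero_le |>.1 (by simpa [K] using hk)
      exact_mod_cast (div_lt_iff₀ hρ).1 this
    have : P k = ∅ := by
      simp only [P, prod_eq_empty_iff]
      exact Or.inl (eq_empty_of_forall_notMem fun x hx => by linarith [hx.1.1, hx.2.2])
    rw [this, ediam_empty, ENNReal.zero_rpow_of_pos (by linarith)]
  have hKρ : (K + 1) * ρ ≤ T + 1 := by
    have : K * ρ ≤ T := by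
      calc K * ρ ≤ T / ρ * ρ := by gcongr; exact Nat.floor_le zero_le
        _ = T := div_mul_cancel₀ _ hρ.ne'
    rw [add_mul, one_mul]
    exact add_le_add this hρ1
  refine ⟨P, ?_, hdiam, ?_⟩
  · rintro ⟨x, y⟩ ⟨hx, hy⟩
    have hxρ : 0 ≤ x / ρ := div_nonneg hx.1 ρ.2
    refine mem_iUnion.2 ⟨⌊x / ρ⌋₊, ⟨⟨?_, ?_⟩, hx⟩, hy⟩
    · exact (le_div_iff₀ (by exact_mod_cast hρ)).1 (Nat.floor_le hxρ)
    · exact ((div_lt_iff₀ (by exact_mod_cast hρ)).1 (Nat.lt_floor_add_one _)).le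
  · calc ∑' k, ediam (P k) ^ (d + 1)
        = ∑ k ∈ Finset.range (K + 1), ediam (P k) ^ (d + 1) := tsum_eq_sum hK
      _ ≤ ∑ k ∈ Finset.range (K + 1), (ρ : ℝ≥0∞) ^ (d + 1) :=
          Finset.sum_le_sum fun k _ => ENNReal.rpow_le_rpow (hdiam k) (by linarith)
      _ = ((K + 1) * ρ : ℝ≥0) * (ρ : ℝ≥0∞) ^ d := by
          rw [Finset.sum_const, Finset.card_range, nsmul_eq_mul,
            ENNReal.rpow_add _ _ (by exact_mod_cast hρ.ne') ENNReal.coe_ne_top, ENNReal.rpow_one]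
          push_cast
          ring
      _ ≤ (T + 1) * (ρ : ℝ≥0∞) ^ d := by
          gcongr
          exact_mod_cast hKρ

section Hausdorff

variable {X : Type*} [EMetricSpace X] [MeasurableSpace X] [BorelSpace X] {d : ℝ} {s : Set X}

theorem hausdorffMeasure_le_of_forall_cover {ι : Type*} [Countable ι] {c : ℝ≥0∞}
    (h : ∀ r : ℝ≥0∞, 0 < r → ∃ t : ι → Set X, s ⊆ ⋃ i, t i ∧ (∀ i, ediam (t i) ≤ r) ∧
      ∑' i, ediam (t i) ^ d ≤ c) :
    μH[d] s ≤ c := by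
  choose t hst ht hc using fun n : ℕ =>
    h (n : ℝ≥0∞)⁻¹ (ENNReal.inv_pos.2 (ENNReal.natCast_ne_top n))
  calc μH[d] s ≤ liminf (fun n => ∑' i, ediam (t n i) ^ d) atTop :=
        hausdorffMeasure_le_liminf_tsum d s _ ENNReal.tendsto_inv_nat_nhds_zero t
          (Eventually.of_forall ht) (Eventually.of_forall hst)
    _ ≤ c := liminf_le_of_frequently_le' (Eventually.of_forall hc).frequently

theorem exists_cover_of_hausdorffMeasure_eq_zero (hd : 0 < d) (hs : μH[d] s = 0)
    {r ε : ℝ≥0∞} (hr : 0 < r) (hε : 0 < ε) :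
    ∃ t : ℕ → Set X, s ⊆ ⋃ n, t n ∧ (∀ n, ediam (t n) ≤ r) ∧ ∑' n, ediam (t n) ^ d < ε := by
  have hinf : (⨅ (t : ℕ → Set X) (_ : s ⊆ ⋃ n, t n) (_ : ∀ n, ediam (t n) ≤ r),
      ∑' n, ⨆ _ : (t n).Nonempty, ediam (t n) ^ d) < ε := by
    refine lt_of_le_of_lt ?_ (hs ▸ hε)
    rw [hausdorffMeasure_apply]
    exact le_iSup₂ (f := fun r (_ : 0 < r) => ⨅ (t : ℕ → Set X) (_ : s ⊆ ⋃ n, t n)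
      (_ : ∀ n, ediam (t n) ≤ r), ∑' n, ⨆ _ : (t n).Nonempty, ediam (t n) ^ d) r hr
  simp only [iInf_lt_iff] at hinf
  obtain ⟨t, hst, htr, hsum⟩ := hinf
  refine ⟨t, hst, htr, lt_of_eq_of_lt (tsum_congr fun n => ?_) hsum⟩
  rcases (t n).eq_empty_or_nonempty with h | h
  · simp [h, ENNReal.zero_rpow_of_pos hd]
  · rw [iSup_pos h]

theorem exists_cover_pos_radius_of_hausdorffMeasure_eq_zero (hd : 0 < d) (hs : μH[d] s = 0)
    {r : ℝ≥0} (hr : 0 < r) {ε : ℝ≥0∞} (hε : 0 < ε) :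
    ∃ (t : ℕ → Set X) (ρ : ℕ → ℝ≥0), s ⊆ ⋃ n, t n ∧
      (∀ n, 0 < ρ n ∧ ρ n ≤ r ∧ ediam (t n) ≤ ρ n) ∧ ∑' n, (ρ n : ℝ≥0∞) ^ d ≤ ε := by
  have hε2 : 0 < ε / 2 := ENNReal.half_pos hε.ne'
  obtain ⟨t, hst, htr, hsum⟩ :=
    exists_cover_of_hausdorffMeasure_eq_zero hd hs (ENNReal.coe_pos.2 hr) hε2
  obtain ⟨η, hη, hηsum⟩ := ENNReal.exists_pos_sum_of_countable hε2.ne' ℕ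
  have htop : ∀ n, ediam (t n) ≠ ⊤ := fun n => ne_top_of_le_ne_top ENNReal.coe_ne_top (htr n)
  set ρ : ℕ → ℝ≥0 := fun n => max (ediam (t n)).toNNReal (min r (η n ^ d⁻¹))
  have hpow : ∀ n, (ρ n : ℝ≥0∞) ^ d ≤ ediam (t n) ^ d + η n := fun n => by
    rcases le_total (ediam (t n)).toNNReal (min r (η n ^ d⁻¹)) with h | h
    · calc ((max _ _ : ℝ≥0) : ℝ≥0∞) ^ d = ((min r (η n ^ d⁻¹) : ℝ≥0) : ℝ≥0∞) ^ d := by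
            rw [max_eq_right h]
        _ ≤ ((η n : ℝ≥0∞) ^ d⁻¹) ^ d := by
            rw [← ENNReal.coe_rpow_of_nonneg _ (inv_nonneg.2 hd.le)]
            gcongr
            exact_mod_cast min_le_right _ _
        _ ≤ ediam (t n) ^ d + η n := by
            rw [ENNReal.rpow_inv_rpow hd.ne']
            exact le_add_self
    · simp only [ρ, max_eq_left h, ENNReal.coe_toNNReal (htop n)]
      exact le_self_add
  refine ⟨t, ρ, hst, fun n => ⟨?_, max_le ?_ (min_le_left _ _), ?_⟩, ?_⟩
  · exact lt_max_of_lt_right (lt_min hr (NNReal.rpow_pos (hη n)))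
  · simpa using ENNReal.toNNReal_mono ENNReal.coe_ne_top (htr n)
  · rw [← ENNReal.coe_toNNReal (htop n)]
    exact_mod_cast le_max_left _ _
  · calc ∑' n, (ρ n : ℝ≥0∞) ^ d ≤ ∑' n, (ediam (t n) ^ d + η n) := ENNReal.tsum_le_tsum hpow
      _ = ∑' n, ediam (t n) ^ d + ∑' n, (η n : ℝ≥0∞) := ENNReal.tsum_add
      _ ≤ ε / 2 + ε / 2 := add_le_add hsum.le hηsum.le
      _ = ε := ENNReal.add_halves ε

/-- The `m`-th set of a `μH[d]`-small cover of `s`, padded to a positive radius `ρ m`, is paired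
with a cut of `Icc 0 T` into about `T / ρ m` intervals of length `ρ m`. -/
theorem hausdorffMeasure_Icc_prod_eq_zero (hd : 0 ≤ d) (hs : μH[d] s = 0) (T : ℝ≥0) :
    μH[d + 1] (Icc 0 (T : ℝ) ×ˢ s) = 0 := by
  rcases hd.eq_or_lt with rfl | hd
  · obtain rfl : s = ∅ := by
      by_contra h
      simpa [hs] using one_le_hausdorffMeasure_zero_of_nonempty (nonempty_iff_ne_empty.2 h)
    simp
  refine le_antisymm (ENNReal.le_of_forall_pos_le_add fun ε hε _ => ?_) zero_le
  rw [zero_add]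
  refine hausdorffMeasure_le_of_forall_cover (ι := ℕ × ℕ) fun r hr => ?_
  obtain ⟨ρ₀, hρ₀, hρ₀r⟩ := ENNReal.lt_iff_exists_nnreal_btwn.1 hr
  have hmin : 0 < min ρ₀ 1 := lt_min (by exact_mod_cast hρ₀) one_pos
  have hε' : 0 < (ε : ℝ≥0∞) / (T + 1) := ENNReal.div_pos (by exact_mod_cast hε.ne') (by simp)
  obtain ⟨t, ρ, hst, hρ, hsum⟩ := exists_cover_pos_radius_of_hausdorffMeasure_eq_zero hd hs hmin hε'
  choose P hPcov hPdiam hPsum using fun m =>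
    exists_cover_Icc_prod T (hρ m).1 ((hρ m).2.1.trans (min_le_right _ _)) (hρ m).2.2 hd.le
  refine ⟨fun mk => P mk.1 mk.2, ?_, fun mk => (hPdiam _ _).trans ?_, ?_⟩
  · rintro ⟨x, y⟩ ⟨hx, hy⟩
    obtain ⟨m, hm⟩ := mem_iUnion.1 (hst hy)
    obtain ⟨k, hk⟩ := mem_iUnion.1 (hPcov m ⟨hx, hm⟩)
    exact mem_iUnion.2 ⟨(m, k), hk⟩
  · exact le_trans (by exact_mod_cast (hρ _).2.1.trans (min_le_left _ _)) hρ₀r.le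
  · calc ∑' mk : ℕ × ℕ, ediam (P mk.1 mk.2) ^ (d + 1)
        = ∑' m, ∑' k, ediam (P m k) ^ (d + 1) :=
          ENNReal.tsum_prod (f := fun m k => ediam (P m k) ^ (d + 1))
      _ ≤ ∑' m, (T + 1) * (ρ m : ℝ≥0∞) ^ d := ENNReal.tsum_le_tsum hPsum
      _ = (T + 1) * ∑' m, (ρ m : ℝ≥0∞) ^ d := ENNReal.tsum_mul_left
      _ ≤ (T + 1) * ((ε : ℝ≥0∞) / (T + 1)) := by gcongr
      _ = ε := ENNReal.mul_div_cancel (by simp) (by simp)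

end Hausdorff

section Flow

variable {E : Type*} [NormedAddCommGroup E] [NormedSpace ℝ E] {v : E → E} {φ : ℝ → E → E}

theorem hasDerivAt_flow_neg (hφ' : ∀ x τ, HasDerivAt (fun t => φ t x) (v (φ τ x)) τ)
    (x : E) (τ : ℝ) : HasDerivAt (fun t => φ (-t) x) ((-v) (φ (-τ) x)) τ := by
  simpa [Function.comp_def] using (hφ' x (-τ)).scomp τ (hasDerivAt_neg τ)

theorem dist_flow_le_mul_exp (hφ0 : ∀ x, φ 0 x = x)
    (hφ' : ∀ x τ, HasDerivAt (fun t => φ t x) (v (φ τ x)) τ) {K : ℝ≥0} {s : Set E}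
    (hv : LipschitzOnWith K v s) {x y : E} {t : ℝ} (ht : 0 ≤ t)
    (hx : MapsTo (φ · x) (Icc 0 t) s) (hy : MapsTo (φ · y) (Icc 0 t) s) :
    dist (φ t x) (φ t y) ≤ dist x y * Real.exp (K * t) := by
  have hcont : ∀ z, ContinuousOn (φ · z) (Icc 0 t) := fun z =>
    (continuous_iff_continuousAt.2 fun u => (hφ' z u).continuousAt).continuousOn
  simpa [hφ0] using dist_le_of_trajectories_ODE_of_mem (v := fun _ => v) (s := fun _ => s)
    (fun _ _ => hv) (hcont x) (fun u _ => (hφ' x u).hasDerivWithinAt)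
    (fun u hu => hx (Ico_subset_Icc_self hu)) (hcont y) (fun u _ => (hφ' y u).hasDerivWithinAt)
    (fun u hu => hy (Ico_subset_Icc_self hu)) (by rw [hφ0, hφ0]) t ⟨ht, le_rfl⟩

theorem dist_flow_le_mul_sub (hφ' : ∀ x τ, HasDerivAt (fun t => φ t x) (v (φ τ x)) τ)
    {M : ℝ} {s : Set E} (hv : ∀ z ∈ s, ‖v z‖ ≤ M) {x : E} {t₁ t₂ : ℝ} (ht : t₁ ≤ t₂)
    (hx : MapsTo (φ · x) (Icc t₁ t₂) s) :
    dist (φ t₂ x) (φ t₁ x) ≤ M * (t₂ - t₁) := by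
  rw [dist_eq_norm]
  exact norm_image_sub_le_of_norm_deriv_le_segment' (f := (φ · x))
    (fun u _ => (hφ' x u).hasDerivWithinAt) (fun u hu => hv _ (hx (Ico_subset_Icc_self hu)))
    t₂ ⟨ht, le_rfl⟩

theorem lipschitzOnWith_flow (hφ0 : ∀ x, φ 0 x = x)
    (hφ' : ∀ x τ, HasDerivAt (fun t => φ t x) (v (φ τ x)) τ) {K M : ℝ≥0} {s : Set E}
    (hvK : LipschitzOnWith K v s) (hvM : ∀ z ∈ s, ‖v z‖ ≤ M) (T : ℝ) :
    LipschitzOnWith ((Real.exp (K * T)).toNNReal + M) (fun p : ℝ × E => φ p.1 p.2)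
      {p | p.1 ∈ Icc 0 T ∧ MapsTo (φ · p.2) (Icc 0 p.1) s} := by
  refine LipschitzOnWith.of_dist_le_mul fun p hp q hq => ?_
  wlog hpq : p.1 ≤ q.1 generalizing p q
  · simpa only [dist_comm] using this q hq p hp (le_of_not_ge hpq)
  obtain ⟨⟨hp0, hpT⟩, hps⟩ := hp
  obtain ⟨-, hqs⟩ := hq
  have hspace :=
    dist_flow_le_mul_exp hφ0 hφ' hvK hp0 hps (hqs.mono_left (Icc_subset_Icc_right hpq))
  have htime := dist_flow_le_mul_sub hφ' hvM hpq (hqs.mono_left (Icc_subset_Icc_left hp0))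
  have hexp : Real.exp (K * p.1) ≤ Real.exp (K * T) := by gcongr
  have hdist : dist p.2 q.2 ≤ dist p q := le_max_right _ _
  have htime' : q.1 - p.1 ≤ dist p q := by
    rw [Prod.dist_eq, Real.dist_eq, abs_sub_comm, abs_of_nonneg (sub_nonneg.2 hpq)]
    exact le_max_left _ _
  calc dist (φ p.1 p.2) (φ q.1 q.2)
      ≤ dist (φ p.1 p.2) (φ p.1 q.2) + dist (φ q.1 q.2) (φ p.1 q.2) :=
        dist_triangle_right _ _ _
    _ ≤ dist p.2 q.2 * Real.exp (K * p.1) + M * (q.1 - p.1) := add_le_add hspace htime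
    _ ≤ dist p q * Real.exp (K * T) + M * dist p q := by gcongr
    _ = _ := by rw [NNReal.coe_add, Real.coe_toNNReal _ (Real.exp_pos _).le]; ring

theorem hausdorffMeasure_iUnion_image_flow_eq_zero [ProperSpace E] [MeasurableSpace E]
    [BorelSpace E] (hv : ContDiff ℝ 1 v) (hφ0 : ∀ x, φ 0 x = x)
    (hφ' : ∀ x τ, HasDerivAt (fun t => φ t x) (v (φ τ x)) τ) {d : ℝ} (hd : 0 ≤ d) {S : Set E}
    (hS : μH[d] S = 0) :
    μH[d + 1] (⋃ t ≥ (0 : ℝ), φ t '' S) = 0 := by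
  set D : ℕ → Set (ℝ × E) := fun n =>
    (Icc 0 (n : ℝ) ×ˢ S) ∩ {p | MapsTo (φ · p.2) (Icc 0 p.1) (closedBall 0 n)}
  have hnull : ∀ n : ℕ, μH[d + 1] ((fun p : ℝ × E => φ p.1 p.2) '' D n) = 0 := fun n => by
    obtain ⟨K, hK⟩ := hv.contDiffOn.exists_lipschitzOnWith one_ne_zero
      (convex_closedBall (0 : E) n) (isCompact_closedBall 0 n)
    obtain ⟨M, hM⟩ := (isCompact_closedBall (0 : E) n).exists_bound_of_continuousOn
      hv.continuous.continuousOn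
    have hlip := (lipschitzOnWith_flow hφ0 hφ' hK (M := M.toNNReal)
      (fun z hz => (hM z hz).trans (Real.le_coe_toNNReal M)) n).mono
      fun p (hp : p ∈ D n) => ⟨hp.1.1, hp.2⟩
    have hD : μH[d + 1] (D n) = 0 := measure_mono_null (fun p hp => hp.1)
      (by simpa using hausdorffMeasure_Icc_prod_eq_zero hd hS (n : ℝ≥0))
    refine le_antisymm ?_ zero_le
    simpa [hD] using hlip.hausdorffMeasure_image_le (d := d + 1) (by linarith)
  refine measure_mono_null ?_ (measure_iUnion_null hnull)
  simp only [iUnion_subset_iff, image_subset_iff]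
  intro t ht y hy
  have hcont : Continuous (φ · y) :=
    continuous_iff_continuousAt.2 fun u => (hφ' y u).continuousAt
  obtain ⟨R, hR⟩ := ((isCompact_Icc (a := 0) (b := t)).image hcont).isBounded.subset_closedBall 0
  obtain ⟨n, hn⟩ := exists_nat_ge (max t R)
  refine mem_iUnion.2 ⟨n, (t, y), ⟨⟨⟨ht, le_of_max_le_left hn⟩, hy⟩, fun u hu => ?_⟩, rfl⟩
  exact closedBall_subset_closedBall (le_of_max_le_right hn) (hR (mem_image_of_mem _ hu))

end Flow

theorem mapsTo_deltaLocalBasin {N : ℕ}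
    {φ : ℝ → EuclideanSpace ℝ (Fin N) → EuclideanSpace ℝ (Fin N)}
    (hφadd : ∀ (s t : ℝ) (x), φ (s + t) x = φ s (φ t x))
    {X : Set (EuclideanSpace ℝ (Fin N))} {δ τ : ℝ} (hτ : 0 ≤ τ) :
    MapsTo (φ τ) (deltaLocalBasin φ X δ) (deltaLocalBasin φ X δ) := by
  rintro x ⟨hnear, hlim⟩
  refine ⟨fun σ hσ => ?_, ?_⟩
  · rw [← hφadd]
    exact hnear _ (by linarith)
  · simp_rw [← hφadd]
    exact hlim.comp (tendsto_atTop_add_const_right _ τ tendsto_id)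

theorem subset_iUnion_image_neg_of_forall_reach {α : Type*} {φ : ℝ → α → α}
    (hφ0 : ∀ x, φ 0 x = x) (hφadd : ∀ (s t : ℝ) (x), φ (s + t) x = φ s (φ t x)) {B H : Set α}
    (hB : ∀ τ, 0 ≤ τ → MapsTo (φ τ) B B) (hreach : ∀ x ∈ B, ∃ τ, 0 ≤ τ ∧ φ τ x ∈ H) :
    B ⊆ ⋃ t ≥ (0 : ℝ), φ (-t) '' (H ∩ B) := fun x hx => by
  obtain ⟨τ, hτ, hτH⟩ := hreach x hx
  refine mem_iUnion₂.2 ⟨τ, hτ, φ τ x, ⟨hτH, hB τ hτ hx⟩, ?_⟩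
  rw [← hφadd, neg_add_cancel, hφ0]

theorem basin_slice_positive_measure_general
    (N : ℕ)
    (f : EuclideanSpace ℝ (Fin N) → EuclideanSpace ℝ (Fin N))
    (hf : ContDiff ℝ 1 f)
    (φ : ℝ → EuclideanSpace ℝ (Fin N) → EuclideanSpace ℝ (Fin N))
    (hφ0 : ∀ x, φ 0 x = x)
    (hφadd : ∀ (s t : ℝ) (x), φ (s + t) x = φ s (φ t x))
    (hφ' : ∀ (x) (τ : ℝ), HasDerivAt (fun t => φ t x) (f (φ τ x)) τ)
    (X : Set (EuclideanSpace ℝ (Fin N)))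
    (δ : ℝ)
    (ℓ : EuclideanSpace ℝ (Fin N) →L[ℝ] ℝ) (hℓ : ℓ ≠ 0) (c : ℝ)
    (hreach : ∀ x ∈ deltaLocalBasin φ X δ, ∃ τ : ℝ, 0 ≤ τ ∧ ℓ (φ τ x) = c)
    (hpos : 0 < volume (deltaLocalBasin φ X δ)) :
    0 < Measure.hausdorffMeasure ((N : ℝ) - 1)
        ({x : EuclideanSpace ℝ (Fin N) | ℓ x = c} ∩ deltaLocalBasin φ X δ) := by
  obtain ⟨n, rfl⟩ : ∃ n, N = n + 1 := Nat.exists_eq_succ_of_ne_zero fun hN => by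
    subst hN
    exact hℓ (Subsingleton.elim _ _)
  set B := deltaLocalBasin φ X δ
  refine pos_iff_ne_zero.2 fun hslice => hpos.ne' ?_
  have hsweep := hausdorffMeasure_iUnion_image_flow_eq_zero hf.neg (by simpa using hφ0)
    (hasDerivAt_flow_neg hφ') n.cast_nonneg (by simpa using hslice)
  have hcover : B ⊆ ⋃ t ≥ (0 : ℝ), φ (-t) '' ({x | ℓ x = c} ∩ B) :=
    subset_iUnion_image_neg_of_forall_reach hφ0 hφadd (fun _ => mapsTo_deltaLocalBasin hφadd)
      hreach
  have hB : μH[((n + 1 : ℕ) : ℝ)] B = 0 := by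
    push_cast
    exact measure_mono_null hcover hsweep
  exact absolutelyContinuous_isAddHaarMeasure volume μH[((n + 1 : ℕ) : ℝ)] hB

/-- Let `f` be a `C¹` vector field on `ℝⁿ` generating a complete flow `φ`,
`X` a compact invariant set, `δ > 0`, and `H = {x | ℓ x = c}` an affine hyperplane such that
every point of the `δ`-local basin of attraction `B_δ(X)` reaches `H` in finite forward time.
If `B_δ(X)` has positive `n`-dimensional Lebesgue measure, then `H ∩ B_δ(X)` has positive
`(n−1)`-dimensional measure (Hausdorff measure of dimension `n − 1`, i.e. Lebesgue measure
computed in `H`). -/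
theorem basin_slice_positive_measure
    (N : ℕ)
    (f : EuclideanSpace ℝ (Fin N) → EuclideanSpace ℝ (Fin N))
    (hf : ContDiff ℝ 1 f)
    (φ : ℝ → EuclideanSpace ℝ (Fin N) → EuclideanSpace ℝ (Fin N))
    (hφ0 : ∀ x, φ 0 x = x)
    (hφadd : ∀ (s t : ℝ) (x), φ (s + t) x = φ s (φ t x))
    (hφ' : ∀ (x) (τ : ℝ), HasDerivAt (fun t => φ t x) (f (φ τ x)) τ)
    (X : Set (EuclideanSpace ℝ (Fin N)))
    (hXc : IsCompact X)
    (hXinv : ∀ (τ : ℝ) (x), x ∈ X → φ τ x ∈ X)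
    (δ : ℝ) (hδ : 0 < δ)
    (ℓ : EuclideanSpace ℝ (Fin N) →L[ℝ] ℝ) (hℓ : ℓ ≠ 0) (c : ℝ)
    (hreach : ∀ x ∈ deltaLocalBasin φ X δ, ∃ τ : ℝ, 0 ≤ τ ∧ ℓ (φ τ x) = c)
    (hpos : 0 < volume (deltaLocalBasin φ X δ)) :
    0 < Measure.hausdorffMeasure ((N : ℝ) - 1)
        ({x : EuclideanSpace ℝ (Fin N) | ℓ x = c} ∩ deltaLocalBasin φ X δ) :=
  basin_slice_positive_measure_general N f hf φ hφ0 hφadd hφ' X δ ℓ hℓ c hreach hpos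
end

section
/- With the basic transition matrices M_j = A_j B_j as in the context, set M := M_m ⋯ M₁, an n₁×n₁ real matrix. Then M maps each insignificant standard basis vector of ℝ^{n₁} to an insignificant standard basis vector; in particular the subspace V^{ins} spanned by the insignificant basis vectors is M-invariant, the restriction of M to V^{ins} permutes the insignificant basis vectors, and every eigenvalue of the restriction of M to V^{ins} has absolute value 1. -/
open Matrix

/-- The matrix `B_j`: its first column is `(b_{j,1}, …, b_{j,n_{j+1}})`, its
`(c_j + k, 1 + k)` entry (in `1`-based indexing) equals `1` for `k = 1, …, n_j − 1`,
and all remaining entries vanish.  Here the data `b` is given as an untyped double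
sequence; only the entries `b j i` with `i < n (j+1)` are used. -/
noncomputable def Bmat (n c : ℕ → ℕ) (b : ℕ → ℕ → ℝ) (j : ℕ) :
    Matrix (Fin (n (j + 1))) (Fin (n j)) ℝ :=
  Matrix.of fun i k =>
    if (k : ℕ) = 0 then b j (i : ℕ)
    else if (i : ℕ) + 1 = c j + (k : ℕ) then 1 else 0

/-- The matrix with entries `A j i k` (the permutation matrix `A_j`, given as an untyped
double sequence). -/
def Amat (n : ℕ → ℕ) (A : ℕ → ℕ → ℕ → ℝ) (j : ℕ) :
    Matrix (Fin (n (j + 1))) (Fin (n (j + 1))) ℝ :=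
  Matrix.of fun i k => A j (i : ℕ) (k : ℕ)

/-- The basic transition matrix `M_j = A_j B_j`. -/
noncomputable def Mmat (n c : ℕ → ℕ) (b : ℕ → ℕ → ℝ) (A : ℕ → ℕ → ℕ → ℝ) (j : ℕ) :
    Matrix (Fin (n (j + 1))) (Fin (n j)) ℝ :=
  Amat n A j * Bmat n c b j

/-- The product `M_{l+k-1} ⋯ M_{l+1} M_l` acting on vectors:
`iterVec n c b A l k v = M_{l+k-1} ⋯ M_l v`. -/
noncomputable def iterVec (n c : ℕ → ℕ) (b : ℕ → ℕ → ℝ) (A : ℕ → ℕ → ℕ → ℝ) (l : ℕ) :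
    (k : ℕ) → (Fin (n l) → ℝ) → (Fin (n (l + k)) → ℝ)
  | 0, v => v
  | k + 1, v => (Mmat n c b A (l + k)).mulVec (iterVec n c b A l k v)

/-- An index `l` (in `0`-based indexing: `1 ≤ l ≤ n_j − 1`, corresponding to the indices
`2, …, n_j` in `1`-based indexing) is insignificant for the collection started at `j` if for
every `k ≥ 1` the vector `M_{j+k-1} ⋯ M_j e_l` is a standard basis vector `e_i` with `i ≥ 2`
(`1`-based), i.e. `i ≥ 1` (`0`-based). -/
def Insignif (n c : ℕ → ℕ) (b : ℕ → ℕ → ℝ) (A : ℕ → ℕ → ℕ → ℝ) (j : ℕ)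
    (l : Fin (n j)) : Prop :=
  1 ≤ (l : ℕ) ∧ ∀ k : ℕ, 1 ≤ k → ∃ i : Fin (n (j + k)),
    1 ≤ (i : ℕ) ∧ iterVec n c b A j k (Pi.single l 1) = Pi.single i 1

/-- The set of insignificant standard basis vectors of `ℝ^{n_j}` (for the collection started
at `j`); its span is `V^{ins}_j`. -/
def insigSet (n c : ℕ → ℕ) (b : ℕ → ℕ → ℝ) (A : ℕ → ℕ → ℕ → ℝ) (j : ℕ) :
    Set (Fin (n j) → ℝ) :=
  {v | ∃ l : Fin (n j), Insignif n c b A j l ∧ v = Pi.single l 1}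

/-- The set of insignificant standard basis vectors inside `ℂ^{n_j}`; its span is the
complexification of `V^{ins}_j`. -/
def insigSetC (n c : ℕ → ℕ) (b : ℕ → ℕ → ℝ) (A : ℕ → ℕ → ℕ → ℝ) (j : ℕ) :
    Set (Fin (n j) → ℂ) :=
  {v | ∃ l : Fin (n j), Insignif n c b A j l ∧ v = Pi.single l 1}

/-- The square transition matrix `M^{(j)} = M_{j+m-1} ⋯ M_j`
(`= M_{j-1} ⋯ M_1 M_m ⋯ M_j` by cyclic periodicity of the data), an
`n_j × n_j` matrix (using `n (j + m) = n j`). -/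
noncomputable def cycMat (n c : ℕ → ℕ) (b : ℕ → ℕ → ℝ) (A : ℕ → ℕ → ℕ → ℝ)
    (m j : ℕ) (h : n (j + m) = n j) : Matrix (Fin (n j)) (Fin (n j)) ℝ :=
  Matrix.of fun i k => iterVec n c b A j m (Pi.single k 1) (Fin.cast h.symm i)

/-- `μ ∈ ℂ` is a significant eigenvalue of the transition matrix `M^{(j)}` if it admits an
eigenvector (over `ℂ`) not lying in the complexification of `V^{ins}_j`. -/
def SigEigenvalue (n c : ℕ → ℕ) (b : ℕ → ℕ → ℝ) (A : ℕ → ℕ → ℕ → ℝ)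
    (m j : ℕ) (h : n (j + m) = n j) (μ : ℂ) : Prop :=
  ∃ v : Fin (n j) → ℂ, v ≠ 0 ∧
    ((cycMat n c b A m j h).map (fun x : ℝ => (x : ℂ))).mulVec v = μ • v ∧
    v ∉ Submodule.span ℂ (insigSetC n c b A j)

/-!
On a basis vector `e_l` with `l ≥ 2` the first column of `B_j` plays no role:
`B_j e_l = e_{c_j + l - 1}`, hence `M_j e_l = e_{σ_j(c_j + l - 1)}` where `σ_j` is the
permutation of `A_j`. So `l` is insignificant exactly when its orbit under these index maps
never reaches the first index, and then `M e_l = e_{l'}` with `l'` the `m`-th point of the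
orbit. By periodicity of the data the orbit of `l'` is a tail of the orbit of `l`, so `l'` is
insignificant. The index maps are injective away from the first index, so `l ↦ l'` is an
injective self-map of a finite set, i.e. a permutation. If `q` is its order, `M^q` is the
identity on `V^{ins}`, so every eigenvalue `μ` there satisfies `μ^q = 1`.
-/

section PermutedBasis

theorem Matrix.map_mulVec_single_one {ι κ R S : Type*} [Fintype κ] [DecidableEq κ]
    [DecidableEq ι] [NonAssocSemiring R] [NonAssocSemiring S] (f : R →+* S) (M : Matrix ι κ R)
    {k : κ} {i : ι}
    (h : M *ᵥ Pi.single k 1 = Pi.single i 1) :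
    M.map f *ᵥ Pi.single k 1 = Pi.single i 1 := by
  ext i'
  have := congrFun h i'
  simp only [mulVec_single_one, col_apply] at this ⊢
  simp [this, Pi.single_apply, apply_ite f]

variable {ι : Type*} [Fintype ι] [DecidableEq ι] {P : ι → Prop}

theorem Matrix.pow_mulVec_single_of_perm {R : Type*} [Semiring R] (M : Matrix ι ι R)
    (e : Equiv.Perm {l // P l}) (hM : ∀ l, M *ᵥ Pi.single l.1 1 = Pi.single (e l).1 1)
    (q : ℕ) (l : {l // P l}) : (M ^ q) *ᵥ Pi.single l.1 1 = Pi.single ((e ^ q) l).1 1 := by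
  induction q generalizing l with
  | zero => rw [pow_zero, one_mulVec, pow_zero, Equiv.Perm.one_apply]
  | succ q ih => rw [pow_succ, ← mulVec_mulVec, hM, ih, pow_succ, Equiv.Perm.mul_apply]

theorem Matrix.pow_orderOf_eq_one_of_mulVec_eq_smul {K : Type*} [Field K] (M : Matrix ι ι K)
    (e : Equiv.Perm {l // P l}) (hM : ∀ l, M *ᵥ Pi.single l.1 1 = Pi.single (e l).1 1)
    {v : ι → K} (hv : v ∈ Submodule.span K {v | ∃ l, P l ∧ v = Pi.single l 1})
    (hv0 : v ≠ 0) {μ : K} (hμ : M *ᵥ v = μ • v) : μ ^ orderOf e = 1 := by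
  have hfix : (M ^ orderOf e) *ᵥ v = v := by
    refine LinearMap.eqOn_span (f := (M ^ orderOf e).mulVecLin) (g := LinearMap.id) ?_ hv
    rintro _ ⟨l, hl, rfl⟩
    simpa [pow_orderOf_eq_one] using M.pow_mulVec_single_of_perm e hM (orderOf e) ⟨l, hl⟩
  have heig : ∀ q : ℕ, (M ^ q) *ᵥ v = μ ^ q • v := by
    intro q
    induction q with
    | zero => simp
    | succ q ih => rw [pow_succ, ← mulVec_mulVec, hμ, mulVec_smul, ih, smul_smul, pow_succ']
  rw [heig] at hfix
  simpa using smul_left_injective K hv0 (hfix.trans (one_smul K v).symm)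

end PermutedBasis

section IndexOrbit

variable (c : ℕ → ℕ) (π : ℕ → Equiv.Perm ℕ)

/-- With `π j` the permutation of `A_j`, `M_j e_t = e_{stepIdx c π j t}` for `1 ≤ t`
(0-based indices); `t = 0` is the column of `B_j` carrying `b_j`. -/
def stepIdx (j t : ℕ) : ℕ := π j (c j + t - 1)

def orbitIdx (j t : ℕ) : ℕ → ℕ
  | 0 => t
  | k + 1 => stepIdx c π (j + k) (orbitIdx j t k)

variable {c π}

theorem stepIdx_injOn {j t t' : ℕ} (ht : 1 ≤ t) (ht' : 1 ≤ t')
    (h : stepIdx c π j t = stepIdx c π j t') : t = t' := by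
  have := (π j).injective h
  omega

theorem orbitIdx_add (j t p k : ℕ) :
    orbitIdx c π j t (p + k) = orbitIdx c π (j + p) (orbitIdx c π j t p) k := by
  induction k with
  | zero => rfl
  | succ k ih =>
    show stepIdx c π (j + (p + k)) (orbitIdx c π j t (p + k)) = stepIdx c π (j + p + k) _
    rw [ih, Nat.add_assoc]

theorem orbitIdx_add_period {m : ℕ} (hc : ∀ j, c (j + m) = c j) (hπ : ∀ j, π (j + m) = π j)
    (j t k : ℕ) : orbitIdx c π (j + m) t k = orbitIdx c π j t k := by
  induction k with
  | zero => rfl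
  | succ k ih =>
    show stepIdx c π (j + m + k) _ = stepIdx c π (j + k) _
    rw [ih, stepIdx, stepIdx, Nat.add_right_comm, hc, hπ]

theorem orbitIdx_injOn {j t t' k : ℕ} (h : ∀ i < k, 1 ≤ orbitIdx c π j t i)
    (h' : ∀ i < k, 1 ≤ orbitIdx c π j t' i)
    (heq : orbitIdx c π j t k = orbitIdx c π j t' k) :
    t = t' := by
  induction k with
  | zero => exact heq
  | succ k ih =>
    exact ih (fun i hi => h i (by omega)) (fun i hi => h' i (by omega))
      (stepIdx_injOn (h k (by omega)) (h' k (by omega)) heq)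

end IndexOrbit

section TransitionMatrices

variable {n c : ℕ → ℕ} {b : ℕ → ℕ → ℝ} {A : ℕ → ℕ → ℕ → ℝ}
  (hAperm : ∀ j : ℕ, ∃ σ : Equiv.Perm (Fin (n (j + 1))),
    ∀ i k : Fin (n (j + 1)), A j (i : ℕ) (k : ℕ) = if i = σ k then (1 : ℝ) else 0)

/-- The permutation of `A_j`, transported to `{0, …, n (j+1) - 1} ⊆ ℕ` and extended by the
identity, so that indices of different dimensions can be compared. -/
noncomputable def permNat (j : ℕ) : Equiv.Perm ℕ :=
  (hAperm j).choose.extendDomain Fin.equivSubtype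

theorem permNat_lt {j t : ℕ} (ht : t < n (j + 1)) : permNat hAperm j t < n (j + 1) := by
  rw [permNat, Equiv.Perm.extendDomain_apply_subtype _ _ (p := (· < n (j + 1))) ht]
  exact (Fin.equivSubtype _).prop

theorem A_eq_ite_permNat {j i t : ℕ} (hi : i < n (j + 1)) (ht : t < n (j + 1)) :
    A j i t = if i = permNat hAperm j t then 1 else 0 := by
  rw [(hAperm j).choose_spec ⟨i, hi⟩ ⟨t, ht⟩, permNat,
    Equiv.Perm.extendDomain_apply_subtype _ _ (p := (· < n (j + 1))) ht]
  simp [Fin.equivSubtype, Fin.ext_iff]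

theorem permNat_add_period {m : ℕ} (hnper : ∀ j, n (j + m) = n j)
    (hAper : ∀ j, A (j + m) = A j) (j : ℕ) : permNat hAperm (j + m) = permNat hAperm j := by
  have hn : n (j + m + 1) = n (j + 1) := by rw [Nat.add_right_comm, hnper]
  ext t
  by_cases ht : t < n (j + 1)
  · have hu := permNat_lt hAperm (hn ▸ ht : t < n (j + m + 1))
    have h1 := A_eq_ite_permNat hAperm hu (hn ▸ ht : t < n (j + m + 1))
    rw [if_pos rfl, hAper, A_eq_ite_permNat hAperm (hn ▸ hu) ht] at h1
    split_ifs at h1 with h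
    exacts [h, absurd h1 zero_ne_one]
  · rw [permNat, permNat,
      Equiv.Perm.extendDomain_apply_not_subtype _ _ (p := (· < n (j + 1))) ht,
      Equiv.Perm.extendDomain_apply_not_subtype _ _ (p := (· < n (j + m + 1))) (hn ▸ ht)]

theorem Bmat_mulVec_single {j : ℕ} (l : Fin (n j)) (hl : 1 ≤ (l : ℕ)) (u : Fin (n (j + 1)))
    (hu : (u : ℕ) = c j + l - 1) : Bmat n c b j *ᵥ Pi.single l 1 = Pi.single u 1 := by
  ext i
  simp only [mulVec_single_one, col_apply, Bmat, of_apply, Pi.single_apply, Fin.ext_iff]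
  rw [if_neg (by omega)]
  exact if_congr (by omega) rfl rfl

theorem Amat_mulVec_single {j : ℕ} (u i : Fin (n (j + 1))) (hi : (i : ℕ) = permNat hAperm j u) :
    Amat n A j *ᵥ Pi.single u 1 = Pi.single i 1 := by
  ext i'
  simp only [mulVec_single_one, col_apply, Amat, of_apply, A_eq_ite_permNat hAperm i'.2 u.2,
    Pi.single_apply, Fin.ext_iff, hi]

theorem Mmat_mulVec_single (hnc : ∀ j, n (j + 1) + 1 = n j + c j) {j : ℕ} (l : Fin (n j))
    (hl : 1 ≤ (l : ℕ)) : ∃ i : Fin (n (j + 1)), (i : ℕ) = stepIdx c (permNat hAperm) j l ∧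
      Mmat n c b A j *ᵥ Pi.single l 1 = Pi.single i 1 := by
  have hu : c j + l - 1 < n (j + 1) := by have := hnc j; omega
  refine ⟨⟨_, permNat_lt hAperm hu⟩, rfl, ?_⟩
  rw [Mmat, ← mulVec_mulVec, Bmat_mulVec_single l hl ⟨_, hu⟩ rfl,
    Amat_mulVec_single hAperm _ ⟨_, permNat_lt hAperm hu⟩ rfl]

theorem iterVec_single (hnc : ∀ j, n (j + 1) + 1 = n j + c j) {j : ℕ} (l : Fin (n j)) (k : ℕ)
    (hk : ∀ i < k, 1 ≤ orbitIdx c (permNat hAperm) j l i) :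
    ∃ i : Fin (n (j + k)), (i : ℕ) = orbitIdx c (permNat hAperm) j l k ∧
      iterVec n c b A j k (Pi.single l 1) = Pi.single i 1 := by
  induction k with
  | zero => exact ⟨l, rfl, rfl⟩
  | succ k ih =>
    obtain ⟨i, hi, hv⟩ := ih fun i hi => hk i (by omega)
    obtain ⟨i', hi', hv'⟩ := Mmat_mulVec_single hAperm (b := b) hnc i (hi ▸ hk k (by omega))
    exact ⟨i', hi'.trans (congrArg _ hi), (congrArg _ hv).trans hv'⟩

theorem insignif_iff_one_le_orbitIdx (hnc : ∀ j, n (j + 1) + 1 = n j + c j) {j : ℕ}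
    (l : Fin (n j)) :
    Insignif n c b A j l ↔ ∀ k, 1 ≤ orbitIdx c (permNat hAperm) j l k := by
  constructor
  · rintro ⟨hl, hins⟩ k
    induction k using Nat.strong_induction_on with
    | _ k ih =>
      rcases Nat.eq_zero_or_pos k with rfl | hk
      · exact hl
      obtain ⟨i, hi, hv⟩ := iterVec_single hAperm (b := b) hnc l k ih
      obtain ⟨i', hi', hv'⟩ := hins k hk
      have hii' : i' = i := by simpa [Pi.single_apply] using congrFun (hv'.symm.trans hv) i'
      exact hi ▸ hii' ▸ hi'
  · intro h
    refine ⟨h 0, fun k _ => ?_⟩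
    obtain ⟨i, hi, hv⟩ := iterVec_single hAperm (b := b) hnc l k fun i _ => h i
    exact ⟨i, hi ▸ h k, hv⟩

theorem cycMat_mulVec_single (hnc : ∀ j, n (j + 1) + 1 = n j + c j) {m j : ℕ}
    (h : n (j + m) = n j) (l : Fin (n j))
    (hl : ∀ i < m, 1 ≤ orbitIdx c (permNat hAperm) j l i) :
    ∃ l' : Fin (n j), (l' : ℕ) = orbitIdx c (permNat hAperm) j l m ∧
      cycMat n c b A m j h *ᵥ Pi.single l 1 = Pi.single l' 1 := by
  obtain ⟨i, hi, hv⟩ := iterVec_single hAperm (b := b) hnc l m hl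
  refine ⟨Fin.cast h i, hi, ?_⟩
  ext i'
  simp only [mulVec_single_one, col_apply, cycMat, of_apply, hv, Pi.single_apply, Fin.ext_iff,
    Fin.val_cast]

theorem exists_insignif_cycMat_mulVec_single (hnc : ∀ j, n (j + 1) + 1 = n j + c j) {m : ℕ}
    (hcper : ∀ j, c (j + m) = c j) (hπ : ∀ j, permNat hAperm (j + m) = permNat hAperm j)
    {j : ℕ} (h : n (j + m) = n j) (l : Fin (n j)) (hl : Insignif n c b A j l) :
    ∃ l' : Fin (n j), Insignif n c b A j l' ∧ (l' : ℕ) = orbitIdx c (permNat hAperm) j l m ∧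
      cycMat n c b A m j h *ᵥ Pi.single l 1 = Pi.single l' 1 := by
  rw [insignif_iff_one_le_orbitIdx hAperm hnc] at hl
  obtain ⟨l', hl', hv⟩ := cycMat_mulVec_single hAperm hnc h l fun i _ => hl i
  refine ⟨l', (insignif_iff_one_le_orbitIdx hAperm hnc l').2 fun k => ?_, hl', hv⟩
  rw [hl', ← orbitIdx_add_period hcper hπ, ← orbitIdx_add]
  exact hl (m + k)

theorem exists_perm_insignif_cycMat_mulVec_single (hnc : ∀ j, n (j + 1) + 1 = n j + c j)
    {m : ℕ} (hcper : ∀ j, c (j + m) = c j)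
    (hπ : ∀ j, permNat hAperm (j + m) = permNat hAperm j) {j : ℕ} (h : n (j + m) = n j) :
    ∃ e : Equiv.Perm {l : Fin (n j) // Insignif n c b A j l},
      ∀ l, cycMat n c b A m j h *ᵥ Pi.single l.1 1 = Pi.single (e l).1 1 := by
  choose f hf_insignif hf_orbit hf using fun l : {l // Insignif n c b A j l} =>
    exists_insignif_cycMat_mulVec_single hAperm hnc hcper hπ h l.1 l.2
  have hinj :
      Function.Injective fun l => (⟨f l, hf_insignif l⟩ : {l // Insignif n c b A j l}) := by
    intro l l' hll'
    have hf_eq : f l = f l' := congrArg Subtype.val hll'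
    have hl := (insignif_iff_one_le_orbitIdx hAperm hnc l.1).1 l.2
    have hl' := (insignif_iff_one_le_orbitIdx hAperm hnc l'.1).1 l'.2
    have horbit : orbitIdx c (permNat hAperm) j l m = orbitIdx c (permNat hAperm) j l' m := by
      rw [← hf_orbit, ← hf_orbit, hf_eq]
    exact Subtype.ext (Fin.ext (orbitIdx_injOn (fun i _ => hl i) (fun i _ => hl' i) horbit))
  exact ⟨Equiv.ofBijective _ (Finite.injective_iff_bijective.1 hinj), hf⟩

end TransitionMatrices

theorem insignificant_subspace_invariant_general
    (m : ℕ)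
    (n c : ℕ → ℕ)
    (hnc : ∀ j, n (j + 1) + 1 = n j + c j)
    (hnper : ∀ j, n (j + m) = n j) (hcper : ∀ j, c (j + m) = c j)
    (b : ℕ → ℕ → ℝ)
    (A : ℕ → ℕ → ℕ → ℝ) (hAper : ∀ j, A (j + m) = A j)
    (hAperm : ∀ j : ℕ, ∃ σ : Equiv.Perm (Fin (n (j + 1))),
      ∀ i k : Fin (n (j + 1)), A j (i : ℕ) (k : ℕ) = if i = σ k then (1 : ℝ) else 0) :
    (∀ l : Fin (n 1), Insignif n c b A 1 l →
      ∃ l' : Fin (n 1), Insignif n c b A 1 l' ∧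
        (cycMat n c b A m 1 (hnper 1)).mulVec (Pi.single l 1) = Pi.single l' 1) ∧
    (∀ v ∈ Submodule.span ℝ (insigSet n c b A 1),
      (cycMat n c b A m 1 (hnper 1)).mulVec v ∈ Submodule.span ℝ (insigSet n c b A 1)) ∧
    (∃ σ : {l : Fin (n 1) // Insignif n c b A 1 l} ≃ {l : Fin (n 1) // Insignif n c b A 1 l},
      ∀ l : {l : Fin (n 1) // Insignif n c b A 1 l},
        (cycMat n c b A m 1 (hnper 1)).mulVec (Pi.single l.1 1) = Pi.single (σ l).1 1) ∧
    (∀ (μ : ℂ) (v : Fin (n 1) → ℂ),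
      v ∈ Submodule.span ℂ (insigSetC n c b A 1) → v ≠ 0 →
      ((cycMat n c b A m 1 (hnper 1)).map (fun x : ℝ => (x : ℂ))).mulVec v = μ • v →
      ‖μ‖ = 1) := by
  obtain ⟨e, he⟩ := exists_perm_insignif_cycMat_mulVec_single hAperm (b := b) hnc hcper
    (permNat_add_period hAperm hnper hAper) (hnper 1)
  have hmaps : ∀ l, Insignif n c b A 1 l → ∃ l', Insignif n c b A 1 l' ∧
      cycMat n c b A m 1 (hnper 1) *ᵥ Pi.single l 1 = Pi.single l' 1 :=
    fun l hl => ⟨e ⟨l, hl⟩, (e ⟨l, hl⟩).2, he ⟨l, hl⟩⟩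
  refine ⟨hmaps, fun v hv => ?_, ⟨e, he⟩, fun μ v hv hv0 hμ => ?_⟩
  · refine (Submodule.span_le (p := (Submodule.span ℝ _).comap
      (cycMat n c b A m 1 (hnper 1)).mulVecLin)).2 ?_ hv
    rintro _ ⟨l, hl, rfl⟩
    obtain ⟨l', hl', hv'⟩ := hmaps l hl
    exact Submodule.subset_span ⟨l', hl', hv'⟩
  · have hμ_pow := Matrix.pow_orderOf_eq_one_of_mulVec_eq_smul _ e
      (fun l => Matrix.map_mulVec_single_one Complex.ofRealHom _ (he l)) hv hv0 hμ
    exact Complex.norm_eq_one_of_pow_eq_one hμ_pow (orderOf_pos e).ne'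

/-- (Theorem 3 in [Podvigina 2012], adapted to type Y cycles.)
With the basic transition matrices `M_j = A_j B_j` (data periodic with period `m`), the
transition matrix `M = M_m ⋯ M_1` maps each insignificant standard basis vector to an
insignificant standard basis vector; in particular the subspace `V^{ins}` spanned by the
insignificant basis vectors is `M`-invariant, the restriction of `M` to `V^{ins}` permutes
the insignificant basis vectors, and every eigenvalue of the restriction of `M` to
`V^{ins}` has absolute value `1`. -/
theorem insignificant_subspace_invariant
    (m : ℕ) (hm : 1 ≤ m)
    (n c : ℕ → ℕ) (hn : ∀ j, 1 ≤ n j)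
    (hnc : ∀ j, n (j + 1) + 1 = n j + c j)
    (hnper : ∀ j, n (j + m) = n j) (hcper : ∀ j, c (j + m) = c j)
    (b : ℕ → ℕ → ℝ) (hbper : ∀ j, b (j + m) = b j)
    (A : ℕ → ℕ → ℕ → ℝ) (hAper : ∀ j, A (j + m) = A j)
    (hAperm : ∀ j : ℕ, ∃ σ : Equiv.Perm (Fin (n (j + 1))),
      ∀ i k : Fin (n (j + 1)), A j (i : ℕ) (k : ℕ) = if i = σ k then (1 : ℝ) else 0) :
    (∀ l : Fin (n 1), Insignif n c b A 1 l →
      ∃ l' : Fin (n 1), Insignif n c b A 1 l' ∧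
        (cycMat n c b A m 1 (hnper 1)).mulVec (Pi.single l 1) = Pi.single l' 1) ∧
    (∀ v ∈ Submodule.span ℝ (insigSet n c b A 1),
      (cycMat n c b A m 1 (hnper 1)).mulVec v ∈ Submodule.span ℝ (insigSet n c b A 1)) ∧
    (∃ σ : {l : Fin (n 1) // Insignif n c b A 1 l} ≃ {l : Fin (n 1) // Insignif n c b A 1 l},
      ∀ l : {l : Fin (n 1) // Insignif n c b A 1 l},
        (cycMat n c b A m 1 (hnper 1)).mulVec (Pi.single l.1 1) = Pi.single (σ l).1 1) ∧
    (∀ (μ : ℂ) (v : Fin (n 1) → ℂ),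
      v ∈ Submodule.span ℂ (insigSetC n c b A 1) → v ≠ 0 →
      ((cycMat n c b A m 1 (hnper 1)).map (fun x : ℝ => (x : ℂ))).mulVec v = μ • v →
      ‖μ‖ = 1) :=
  insignificant_subspace_invariant_general m n c hnc hnper hcper b A hAper hAperm
end

section
/- Consider the generalised Lotka–Volterra system ẋ_i = x_i(r_i + Σ_{j=1}^n a_{ij} x_j), i = 1,…,n, on the closed positive orthant ℝⁿ_{0,+}. The open positive orthant ℝⁿ₊ contains α- or ω-limit points of the induced flow — i.e. there exists a solution x(τ) in ℝⁿ₊ (defined on a maximal forward, respectively backward, half-line) whose ω-limit set (respectively α-limit set) intersects ℝⁿ₊ — if and only if the system admits an interior steady state, i.e. a point x ∈ ℝⁿ₊ with all coordinates positive satisfying r_i + Σ_{j=1}^n a_{ij} x_j = 0 for every i. -/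
/-!
If there is no interior steady state, the convex cone `{t r + A y : t > 0, y ∈ ℝⁿ₊}` misses `0`,
so a linear functional `c` separating it from `0` gives `Σ cᵢ (rᵢ + (A y)ᵢ) > 0` on all of `ℝⁿ₊`.
Along an interior solution `V = Σ cᵢ log xᵢ` then has derivative `Σ cᵢ (rᵢ + (A x)ᵢ) ≥ 0`.
Near an interior `ω`-limit point `p` this derivative is at least `δ > 0`, and the speed is bounded,
so after each visit close to `p` the orbit stays near `p` for a uniform time `h` and `V` gains
`δ h`; this is impossible since `V` increases to its limit `V(p)` along the visits.
An `α`-limit point is an `ω`-limit point of the time-reversed system, which is again of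
Lotka–Volterra type, with coefficients `(-r, -a)`.
-/

open Filter Topology Set Metric

theorem exists_linearMap_pos_on_image_of_forall_ne_zero {E F : Type*} [NormedAddCommGroup E]
    [NormedSpace ℝ E] [NormedAddCommGroup F] [NormedSpace ℝ F] [FiniteDimensional ℝ F]
    (L : E →ₗ[ℝ] F) {U : Set E} (hUo : IsOpen U) (hUc : Convex ℝ U) (hL : ∀ u ∈ U, L u ≠ 0) :
    ∃ g : F →ₗ[ℝ] ℝ, ∀ u ∈ U, 0 < g (L u) := by
  have hopen : IsOpen (L.rangeRestrict '' U) :=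
    L.rangeRestrict.isOpenMap_of_finiteDimensional L.surjective_rangeRestrict U hUo
  have h0 : (0 : LinearMap.range L) ∉ L.rangeRestrict '' U := by
    rintro ⟨u, hu, hu0⟩
    exact hL u hu (congrArg Subtype.val hu0)
  obtain ⟨f, hf⟩ := geometric_hahn_banach_open_point (hUc.linear_image _) hopen h0
  obtain ⟨g, hg⟩ := LinearMap.exists_extend (-f.toLinearMap)
  refine ⟨g, fun u hu => ?_⟩
  have hgu : g (L u) = -f (L.rangeRestrict u) := LinearMap.congr_fun hg (L.rangeRestrict u)
  have hfu : f (L.rangeRestrict u) < 0 := by simpa using hf _ ⟨u, hu, rfl⟩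
  linarith

theorem dist_le_of_hasDerivAt_of_norm_lt {E : Type*} [NormedAddCommGroup E] [NormedSpace ℝ E]
    {x x' : ℝ → E} {p : E} {t₀ h ε M : ℝ}
    (hx : ∀ t ∈ Icc t₀ (t₀ + h), HasDerivAt x (x' t) t)
    (hx' : ∀ t ∈ Icc t₀ (t₀ + h), dist (x t) p ≤ ε → ‖x' t‖ < M)
    (h₀ : dist (x t₀) p ≤ ε / 2) (hM : 0 ≤ M) (hMh : M * h ≤ ε / 2) :
    ∀ t ∈ Icc t₀ (t₀ + h), dist (x t) p ≤ ε := by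
  have hB : ∀ t, HasDerivAt (fun s => ε / 2 + M * (s - t₀)) M t := fun t => by
    simpa using (((hasDerivAt_id t).sub_const t₀).const_mul M).const_add (ε / 2)
  -- the speed bound is only needed where `x` touches the fence `ε / 2 + M (t - t₀) ≤ ε`
  have hfence := image_norm_le_of_norm_deriv_right_lt_deriv_boundary
    (f := fun t => x t - p) (hB := hB)
    (fun t ht => ((hx t ht).continuousAt.sub continuousAt_const).continuousWithinAt)
    (fun t ht => ((hx t (Ico_subset_Icc_self ht)).sub_const p).hasDerivWithinAt)
    (by simpa [dist_eq_norm] using h₀)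
    (fun t ht heq => hx' t (Ico_subset_Icc_self ht) (by
      rw [dist_eq_norm, heq]; nlinarith [ht.1, ht.2]))
  intro t ht
  calc dist (x t) p = ‖x t - p‖ := dist_eq_norm _ _
    _ ≤ ε / 2 + M * (t - t₀) := hfence ht
    _ ≤ ε := by nlinarith [ht.1, ht.2]

theorem not_tendsto_of_lyapunov_deriv_pos {E : Type*} [NormedAddCommGroup E] [NormedSpace ℝ E]
    {f : E → E} {Φ W : E → ℝ} {x : ℝ → E} {p : E} {σ : ℕ → ℝ}
    (hf : ContinuousAt f p) (hΦ : ContinuousAt Φ p) (hW : ContinuousAt W p) (hWp : 0 < W p)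
    (hx : ∀ t, 0 ≤ t → HasDerivAt x (f (x t)) t)
    (hΦx : ∀ t, 0 ≤ t → HasDerivAt (fun s => Φ (x s)) (W (x t)) t)
    (hWx : ∀ t, 0 ≤ t → 0 ≤ W (x t)) (hσ : Tendsto σ atTop atTop) :
    ¬ Tendsto (fun k => x (σ k)) atTop (𝓝 p) := by
  intro hlim
  set V := fun s => Φ (x s)
  have hmono : MonotoneOn V (Ici 0) :=
    monotoneOn_of_hasDerivWithinAt_nonneg (convex_Ici 0)
      (fun t ht => (hΦx t ht).continuousAt.continuousWithinAt)
      (fun t ht => (hΦx t (interior_subset ht)).hasDerivWithinAt)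
      (fun t ht => hWx t (interior_subset ht))
  have hVσ : Tendsto (fun k => V (σ k)) atTop (𝓝 (Φ p)) := hΦ.tendsto.comp hlim
  have hV_le : ∀ t, 0 ≤ t → V t ≤ Φ p := fun t ht =>
    ge_of_tendsto hVσ ((hσ.eventually_ge_atTop t).mono fun k hk => hmono ht (ht.trans hk) hk)
  obtain ⟨ε, hε, hnear⟩ : ∃ ε > 0, ∀ y ∈ closedBall p ε, W p / 2 ≤ W y ∧ ‖f y‖ < ‖f p‖ + 1 :=
    nhds_basis_closedBall.eventually_iff.1 ((hW.eventually (le_mem_nhds (half_lt_self hWp))).and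
      (hf.norm.eventually (gt_mem_nhds (lt_add_one _))))
  set M := ‖f p‖ + 1
  have hM : 0 < M := by positivity
  obtain ⟨h, hh, hMh⟩ : ∃ h > 0, M * h = ε / 2 := ⟨ε / (2 * M), by positivity, by field_simp⟩
  have hgain : ∀ᶠ k in atTop, 0 ≤ σ k ∧ V (σ k) + W p / 2 * h ≤ V (σ k + h) := by
    filter_upwards [hσ.eventually_ge_atTop 0,
      hlim.eventually (closedBall_mem_nhds p (half_pos hε))] with k hk0 hk
    have hstay := dist_le_of_hasDerivAt_of_norm_lt (fun t ht => hx t (hk0.trans ht.1))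
      (fun t _ hdist => (hnear _ hdist).2) hk hM.le hMh.le
    have hIcc : ∀ t ∈ Icc (σ k) (σ k + h), 0 ≤ t := fun t ht => hk0.trans ht.1
    have hmvt := (convex_Icc (σ k) (σ k + h)).mul_sub_le_image_sub_of_le_deriv
      (f := V) (C := W p / 2)
      (fun t ht => (hΦx t (hIcc t ht)).continuousAt.continuousWithinAt)
      (fun t ht => (hΦx t (hIcc t (interior_subset ht))).differentiableAt.differentiableWithinAt)
      (fun t ht => by
        rw [(hΦx t (hIcc t (interior_subset ht))).deriv]
        exact (hnear _ (hstay t (interior_subset ht))).1)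
      (σ k) (left_mem_Icc.2 (by linarith)) (σ k + h) (right_mem_Icc.2 (by linarith)) (by linarith)
    exact ⟨hk0, by linarith⟩
  obtain ⟨k, ⟨hk0, hk_gain⟩, hk_close⟩ := (hgain.and (hVσ.eventually
    (lt_mem_nhds (sub_lt_self (Φ p) (by positivity : 0 < W p / 2 * h))))).exists
  linarith [hV_le (σ k + h) (by linarith)]

theorem isOpen_pos_orthant {ι : Type*} [Finite ι] : IsOpen {y : ι → ℝ | ∀ i, 0 < y i} := by
  simpa only [ofPred_forall] using
    isOpen_iInter_of_finite fun i => isOpen_lt continuous_const (continuous_apply i)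

theorem convex_pos_orthant {ι : Type*} : Convex ℝ {y : ι → ℝ | ∀ i, 0 < y i} := by
  simpa [Set.pi] using convex_pi (s := univ) fun (_ : ι) _ => convex_Ioi (0 : ℝ)

variable {N : ℕ}

def glvRate (r : Fin N → ℝ) (a : Fin N → Fin N → ℝ) (y : Fin N → ℝ) : Fin N → ℝ :=
  fun i => r i + ∑ j, a i j * y j

theorem continuous_glvRate (r : Fin N → ℝ) (a : Fin N → Fin N → ℝ) :
    Continuous (glvRate r a) := by
  unfold glvRate
  fun_prop

theorem glvRate_neg (r : Fin N → ℝ) (a : Fin N → Fin N → ℝ) (y : Fin N → ℝ) (i : Fin N) :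
    glvRate (-r) (-a) y i = -glvRate r a y i := by
  simp only [glvRate, Pi.neg_apply, neg_mul, Finset.sum_neg_distrib, neg_add]

variable {r : Fin N → ℝ} {a : Fin N → Fin N → ℝ}

theorem hasDerivAt_sum_mul_log_of_glv {x : ℝ → Fin N → ℝ} {t : ℝ}
    (hx : HasDerivAt x (fun i => x t i * glvRate r a (x t) i) t) (hpos : ∀ i, 0 < x t i)
    (c : Fin N → ℝ) :
    HasDerivAt (fun s => ∑ i, c i * Real.log (x s i)) (∑ i, c i * glvRate r a (x t) i) t := by
  refine HasDerivAt.fun_sum fun i _ => ?_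
  have := ((hasDerivAt_pi.1 hx i).log (hpos i).ne').const_mul (c i)
  rwa [mul_div_cancel_left₀ _ (hpos i).ne'] at this

theorem hasDerivAt_comp_neg_of_glv {x : ℝ → Fin N → ℝ}
    (hx : ∀ t, t ≤ 0 → HasDerivAt x (fun i => x t i * glvRate r a (x t) i) t)
    (t : ℝ) (ht : 0 ≤ t) :
    HasDerivAt (fun s => x (-s)) (fun i => x (-t) i * glvRate (-r) (-a) (x (-t)) i) t := by
  refine ((hx (-t) (neg_nonpos.2 ht)).scomp t (hasDerivAt_neg t)).congr_deriv
    (funext fun i => ?_)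
  simp [glvRate_neg]

theorem exists_weighted_glvRate_pos_of_no_interior_steady_state
    (h : ¬ ∃ y : Fin N → ℝ, (∀ i, 0 < y i) ∧ ∀ i, glvRate r a y i = 0) :
    ∃ c : Fin N → ℝ, ∀ y : Fin N → ℝ, (∀ i, 0 < y i) → 0 < ∑ i, c i * glvRate r a y i := by
  let L : ℝ × (Fin N → ℝ) →ₗ[ℝ] Fin N → ℝ :=
    (LinearMap.fst ℝ ℝ _).smulRight r + (Matrix.of a).mulVecLin ∘ₗ LinearMap.snd ℝ ℝ _
  have hL : ∀ t y i, L (t, y) i = t * r i + ∑ j, a i j * y j := fun t y i => by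
    simp [L, Matrix.mulVec, dotProduct]
  have hL0 : ∀ u ∈ Ioi (0 : ℝ) ×ˢ {y : Fin N → ℝ | ∀ i, 0 < y i}, L u ≠ 0 := by
    rintro ⟨t, y⟩ ⟨ht : 0 < t, hy : ∀ i, 0 < y i⟩ hLu
    refine h ⟨t⁻¹ • y, fun i => mul_pos (inv_pos.2 ht) (hy i), fun i => ?_⟩
    calc glvRate r a (t⁻¹ • y) i = t⁻¹ * L (t, y) i := by
          simp only [glvRate, hL, Pi.smul_apply, smul_eq_mul, mul_add, Finset.mul_sum]
          field_simp
      _ = 0 := by rw [hLu, Pi.zero_apply, mul_zero]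
  obtain ⟨g, hg⟩ := exists_linearMap_pos_on_image_of_forall_ne_zero L
    (isOpen_Ioi.prod isOpen_pos_orthant) ((convex_Ioi 0).prod convex_pos_orthant) hL0
  refine ⟨fun i => g fun j => if i = j then 1 else 0, fun y hy => ?_⟩
  have hgy := hg (1, y) (mk_mem_prod (mem_Ioi.2 one_pos) hy)
  rw [g.pi_apply_eq_sum_univ] at hgy
  simpa [hL, glvRate, mul_comm] using hgy

theorem exists_interior_steady_state_of_omega_limit {x : ℝ → Fin N → ℝ} {p : Fin N → ℝ}
    {σ : ℕ → ℝ} (hx : ∀ t, 0 ≤ t → HasDerivAt x (fun i => x t i * glvRate r a (x t) i) t)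
    (hpos : ∀ t, 0 ≤ t → ∀ i, 0 < x t i) (hp : ∀ i, 0 < p i) (hσ : Tendsto σ atTop atTop)
    (hlim : Tendsto (fun k => x (σ k)) atTop (𝓝 p)) :
    ∃ y : Fin N → ℝ, (∀ i, 0 < y i) ∧ ∀ i, glvRate r a y i = 0 := by
  by_contra hno
  obtain ⟨c, hc⟩ := exists_weighted_glvRate_pos_of_no_interior_steady_state hno
  have hrate := continuous_glvRate r a
  refine not_tendsto_of_lyapunov_deriv_pos (f := fun y i => y i * glvRate r a y i)
    (Φ := fun y => ∑ i, c i * Real.log (y i)) (W := fun y => ∑ i, c i * glvRate r a y i)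
    (by fun_prop) ?_ (by fun_prop) (hc p hp) hx
    (fun t ht => hasDerivAt_sum_mul_log_of_glv (hx t ht) (hpos t ht) c)
    (fun t ht => (hc _ (hpos t ht)).le) hσ hlim
  exact tendsto_finsetSum _ fun i _ =>
    (((continuous_apply i).tendsto p).log (hp i).ne').const_mul (c i)

/-- For the generalised Lotka–Volterra system
`ẋ_i = x_i (r_i + Σ_j a_{ij} x_j)` on the closed positive orthant, the open positive orthant
contains `α`- or `ω`-limit points of the flow — i.e. there is a solution lying in the open
orthant (on a forward, respectively backward, half-line) with an `ω`-limit point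
(respectively `α`-limit point) in the open orthant — if and only if the system admits an
interior steady state, i.e. a point with all coordinates positive where
`r_i + Σ_j a_{ij} x_j = 0` for every `i`. -/
theorem glv_interior_limit_points_iff_interior_steady_state
    (N : ℕ) (r : Fin N → ℝ) (a : Fin N → Fin N → ℝ) :
    ((∃ (x : ℝ → Fin N → ℝ) (p : Fin N → ℝ) (τs : ℕ → ℝ),
        (∀ τ : ℝ, 0 ≤ τ →
          HasDerivAt x (fun i => x τ i * (r i + ∑ j, a i j * x τ j)) τ) ∧
        (∀ τ : ℝ, 0 ≤ τ → ∀ i, 0 < x τ i) ∧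
        (∀ i, 0 < p i) ∧
        Tendsto τs atTop atTop ∧
        Tendsto (fun k => x (τs k)) atTop (nhds p)) ∨
     (∃ (x : ℝ → Fin N → ℝ) (p : Fin N → ℝ) (τs : ℕ → ℝ),
        (∀ τ : ℝ, τ ≤ 0 →
          HasDerivAt x (fun i => x τ i * (r i + ∑ j, a i j * x τ j)) τ) ∧
        (∀ τ : ℝ, τ ≤ 0 → ∀ i, 0 < x τ i) ∧
        (∀ i, 0 < p i) ∧
        Tendsto τs atTop atBot ∧
        Tendsto (fun k => x (τs k)) atTop (nhds p)))
    ↔ ∃ x : Fin N → ℝ, (∀ i, 0 < x i) ∧ ∀ i, r i + ∑ j, a i j * x j = 0 := by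
  constructor
  · rintro (⟨x, p, τs, hx, hpos, hp, hτs, hlim⟩ | ⟨x, p, τs, hx, hpos, hp, hτs, hlim⟩)
    · exact exists_interior_steady_state_of_omega_limit hx hpos hp hτs hlim
    · obtain ⟨y, hy, hy0⟩ := exists_interior_steady_state_of_omega_limit (r := -r) (a := -a)
        (hasDerivAt_comp_neg_of_glv hx) (fun t ht => hpos (-t) (neg_nonpos.2 ht)) hp
        (tendsto_neg_atBot_atTop.comp hτs) (by simpa using hlim)
      exact ⟨y, hy, fun i => neg_eq_zero.1 ((glvRate_neg r a y i).symm.trans (hy0 i))⟩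
  · rintro ⟨y, hy, hy0⟩
    refine Or.inl ⟨fun _ => y, y, (↑), fun t _ => ?_, fun _ _ => hy, hy,
      tendsto_natCast_atTop_atTop, tendsto_const_nhds⟩
    exact (hasDerivAt_const t y).congr_deriv (funext fun i => by simp [hy0])
end

section
/- Consider the planar system ẋ₁ = α₁x₁(1−x₁+β₁x₂), ẋ₂ = α₂x₂(1−x₂+γ₂x₁) with α₁ > 0 and α₂ > 0, and its equilibria ξ₁ = (1,0), ξ₂ = (0,1). If 1+β₁ > 0, 1+γ₂ > 0, and β₁γ₂ > 1, then: (i) the only equilibria of the system in the closed quadrant ℝ²_{0,+} are (0,0), ξ₁ and ξ₂; and (ii) for every x₀ ∈ ℝ²₊ the maximal solution with x(0) = x₀ remains in ℝ²₊ and both of its components tend to +∞ as τ tends to the right endpoint of its maximal interval of existence. -/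
/-!
Rescale the vector field by the positive factor `(1 + x₁² + x₂²)⁻¹`: the rescaled field is bounded
and `C¹`, so it has global integral curves, and these curves are the Lotka–Volterra orbits run at a
different speed. Undoing the time change `τ = ∫ (1 + x₁² + x₂²)⁻¹` gives the solution of the
original system; it lives on `[0, T)` with `T = sup τ ∈ (0, ∞]`.

On a rescaled orbit the two components keep their signs. In the open quadrant the nullclines
`P = 1 - x₁ + β₁ x₂` and `Q = 1 - x₂ + γ₂ x₁` cannot be both nonpositive, because `β₁ γ₂ > 1` and
`β₁, γ₂ > 0`. Hence `Ṗ = β₁ ẋ₂ > 0` wherever `P = 0`, so `{P ≥ 0}` is forward invariant, and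
likewise `{Q ≥ 0}`. An orbit that stays in `{P ≥ 0, Q < 0}` is monotone and bounded, so it
converges to an equilibrium with `P = 0 ≥ Q`, which is impossible. So the orbit enters the wedge
`{P ≥ 0, Q ≥ 0}`, where both components increase; a bounded component would force the other to be
bounded too, and the limit would be an equilibrium in the open quadrant, of which there is none.
-/

open Filter

/-- The planar generalised Lotka–Volterra vector field
`ẋ₁ = α₁ x₁ (1 − x₁ + β₁ x₂)`, `ẋ₂ = α₂ x₂ (1 − x₂ + γ₂ x₁)`. -/
def lv2 (α₁ α₂ β₁ γ₂ : ℝ) : ℝ × ℝ → ℝ × ℝ := fun x =>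
  (α₁ * x.1 * (1 - x.1 + β₁ * x.2), α₂ * x.2 * (1 - x.2 + γ₂ * x.1))

open Set Topology Metric

theorem LocallyLipschitz.exists_lipschitzOnWith_closedBall {X Y : Type*} [PseudoMetricSpace X]
    [ProperSpace X] [PseudoMetricSpace Y] {f : X → Y} (hf : LocallyLipschitz f) (x : X)
    (r : ℝ) : ∃ K, LipschitzOnWith K f (closedBall x r) :=
  hf.locallyLipschitzOn.exists_lipschitzOnWith_of_compact (isCompact_closedBall x r)

section GlobalExistence

variable {E : Type*} [NormedAddCommGroup E] [NormedSpace ℝ E] {F : E → E} {C : ℝ}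

theorem mem_closedBall_of_forall_hasDerivAt_Ioo (hC : ∀ x, ‖F x‖ ≤ C) {γ : ℝ → E} {a : ℝ}
    (hγ : ∀ t ∈ Ioo (-a) a, HasDerivAt γ (F (γ t)) t) {t : ℝ} (ht : t ∈ Ioo (-a) a) :
    γ t ∈ closedBall (γ 0) (C * a) := by
  have h0 : (0 : ℝ) ∈ Ioo (-a) a := ⟨by linarith [ht.1, ht.2], by linarith [ht.1, ht.2]⟩
  have := (convex_Ioo (-a) a).norm_image_sub_le_of_norm_hasDerivWithin_le
    (fun s hs => (hγ s hs).hasDerivWithinAt) (fun s _ => hC _) h0 ht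
  rw [mem_closedBall, dist_eq_norm]
  refine this.trans (mul_le_mul_of_nonneg_left ?_ ((norm_nonneg _).trans (hC 0)))
  rw [sub_zero, Real.norm_eq_abs, abs_le]
  exact ⟨ht.1.le, ht.2.le⟩

variable [ProperSpace E]

theorem exists_forall_hasDerivAt_Ioo_of_bounded (hF : LocallyLipschitz F)
    (hC : ∀ x, ‖F x‖ ≤ C) (x₀ : E) (a : ℝ) :
    ∃ γ : ℝ → E, γ 0 = x₀ ∧ ∀ t ∈ Ioo (-a) a, HasDerivAt γ (F (γ t)) t := by
  rcases le_or_gt a 0 with ha | ha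
  · exact ⟨fun _ => x₀, rfl, fun t ht => absurd (ht.1.trans ht.2) (by linarith)⟩
  have hC₀ : 0 ≤ C := (norm_nonneg _).trans (hC x₀)
  obtain ⟨K, hK⟩ := hF.exists_lipschitzOnWith_closedBall x₀ (C * a)
  have h0 : (0 : ℝ) ∈ Icc (-a) a := ⟨by linarith, ha.le⟩
  have hPL : IsPicardLindelof (fun _ => F) (⟨0, h0⟩ : Icc (-a) a) x₀
      ⟨C * a, by positivity⟩ 0 ⟨C, hC₀⟩ K :=
    { lipschitzOnWith := fun _ _ => hK
      continuousOn := fun _ _ => continuousOn_const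
      norm_le := fun _ _ x _ => hC x
      mul_max_le := by
        simp only [sub_zero, sub_neg_eq_add, zero_add, max_self, NNReal.coe_zero]
        exact le_rfl }
  obtain ⟨γ, hγ0, hγ⟩ := hPL.exists_eq_forall_mem_Icc_hasDerivWithinAt₀
  exact ⟨γ, hγ0, fun t ht =>
    (hγ t (Ioo_subset_Icc_self ht)).hasDerivAt (Icc_mem_nhds ht.1 ht.2)⟩

theorem eqOn_Ioo_of_forall_hasDerivAt (hF : LocallyLipschitz F) (hC : ∀ x, ‖F x‖ ≤ C)
    {γ γ' : ℝ → E} {a : ℝ} (hγ : ∀ t ∈ Ioo (-a) a, HasDerivAt γ (F (γ t)) t)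
    (hγ' : ∀ t ∈ Ioo (-a) a, HasDerivAt γ' (F (γ' t)) t) (h0 : γ 0 = γ' 0) :
    EqOn γ γ' (Ioo (-a) a) := by
  intro t ht
  have ha : (0 : ℝ) ∈ Ioo (-a) a := ⟨by linarith [ht.1, ht.2], by linarith [ht.1, ht.2]⟩
  obtain ⟨K, hK⟩ := hF.exists_lipschitzOnWith_closedBall (γ 0) (C * a)
  refine ODE_solution_unique_of_mem_Ioo (v := fun _ => F) (s := fun _ => closedBall (γ 0) (C * a))
    (fun _ _ => hK) ha (fun s hs => ⟨hγ s hs, mem_closedBall_of_forall_hasDerivAt_Ioo hC hγ hs⟩)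
    (fun s hs => ⟨hγ' s hs, h0 ▸ mem_closedBall_of_forall_hasDerivAt_Ioo hC hγ' hs⟩) h0 ht

theorem exists_forall_hasDerivAt_of_bounded (hF : LocallyLipschitz F) (hC : ∀ x, ‖F x‖ ≤ C)
    (x₀ : E) : ∃ y : ℝ → E, y 0 = x₀ ∧ ∀ t, HasDerivAt y (F (y t)) t := by
  choose γ hγ0 hγ using exists_forall_hasDerivAt_Ioo_of_bounded hF hC x₀
  have hmem (t : ℝ) : t ∈ Ioo (-(|t| + 1)) (|t| + 1) := by
    rw [mem_Ioo, ← abs_lt]; exact lt_add_one _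
  have hsub {a b : ℝ} (hab : b ≤ a) : Ioo (-b) b ⊆ Ioo (-a) a :=
    Ioo_subset_Ioo (neg_le_neg hab) hab
  have hglue (a : ℝ) : EqOn (fun t => γ (|t| + 1) t) (γ a) (Ioo (-a) a) := by
    intro t ht
    rcases le_total (|t| + 1) a with h | h
    · exact eqOn_Ioo_of_forall_hasDerivAt hF hC (hγ _)
        (fun s hs => hγ a s (hsub h hs)) (by rw [hγ0, hγ0]) (hmem t)
    · exact eqOn_Ioo_of_forall_hasDerivAt hF hC (fun s hs => hγ _ s (hsub h hs))
        (hγ a) (by rw [hγ0, hγ0]) ht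
  refine ⟨fun t => γ (|t| + 1) t, by simp [hγ0], fun t => ?_⟩
  have ht := hmem t
  refine ((hγ _ t ht).congr_of_eventuallyEq ?_).congr_deriv (by rw [← hglue _ ht])
  exact (hglue _).eventuallyEq_of_mem (Ioo_mem_nhds ht.1 ht.2)

end GlobalExistence

section TimeChange

variable {E : Type*} [NormedAddCommGroup E] [NormedSpace ℝ E] {f : E → E} {y : ℝ → E}
  {c τ : ℝ → ℝ}

theorem hasDerivAt_comp_invFun (hτ : ∀ s, HasStrictDerivAt τ (c s) s) (hc : ∀ s, c s ≠ 0)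
    (hτ_inj : Function.Injective τ) (hy : ∀ s, HasDerivAt y (c s • f (y s)) s) (s : ℝ) :
    HasDerivAt (y ∘ Function.invFun τ) (f (y s)) (τ s) := by
  have hσ : HasDerivAt (Function.invFun τ) (c s)⁻¹ (τ s) :=
    ((hτ s).to_local_left_inverse (hc s)
      (Eventually.of_forall (Function.leftInverse_invFun hτ_inj))).hasDerivAt
  have hy' := hy s
  rw [← Function.leftInverse_invFun hτ_inj s] at hy'
  convert hy'.scomp (τ s) hσ using 1
  rw [Function.leftInverse_invFun hτ_inj s, smul_smul, inv_mul_cancel₀ (hc s), one_smul]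

theorem tendsto_invFun_atTop (hτ : StrictMono τ) {l : Filter ℝ}
    (hl : ∀ᶠ t in l, t ∈ range τ) (hl_ge : ∀ b, ∀ᶠ t in l, τ b ≤ t) :
    Tendsto (Function.invFun τ) l atTop := by
  refine tendsto_atTop.2 fun b => (hl.and (hl_ge b)).mono ?_
  rintro _ ⟨⟨s, rfl⟩, hs⟩
  rw [Function.leftInverse_invFun hτ.injective s]
  exact hτ.le_iff_le.1 hs

theorem exists_reparametrization (hc : Continuous c) (hc₀ : ∀ s, 0 < c s)
    (hy : ∀ s, HasDerivAt y (c s • f (y s)) s) :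
    ∃ σ : ℝ → ℝ, σ 0 = 0 ∧
      (((∀ t, 0 ≤ t → HasDerivAt (y ∘ σ) (f (y (σ t))) t) ∧ Tendsto σ atTop atTop) ∨
       (∃ T, 0 < T ∧ (∀ t, 0 ≤ t → t < T → HasDerivAt (y ∘ σ) (f (y (σ t))) t) ∧
          Tendsto σ (𝓝[<] T) atTop)) := by
  set τ : ℝ → ℝ := fun s => ∫ r in (0 : ℝ)..s, c r
  have hτ (s : ℝ) : HasStrictDerivAt τ (c s) s := hc.integral_hasStrictDerivAt 0 s
  have hτ_mono : StrictMono τ := strictMono_of_hasDerivAt_pos (fun s => (hτ s).hasDerivAt) hc₀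
  have hτ0 : τ 0 = 0 := intervalIntegral.integral_same
  have hσ := Function.leftInverse_invFun hτ_mono.injective
  have hrange {t : ℝ} (ht : 0 ≤ t) {s : ℝ} (hs : t < τ s) : t ∈ range τ :=
    (isPreconnected_range (continuous_iff_continuousAt.2 fun s =>
      (hτ s).hasDerivAt.continuousAt)).ordConnected.out
      ⟨0, hτ0⟩ ⟨s, rfl⟩ ⟨ht, hs.le⟩
  have hderiv {t : ℝ} (ht : t ∈ range τ) :
      HasDerivAt (y ∘ Function.invFun τ) (f (y (Function.invFun τ t))) t := by
    obtain ⟨s, rfl⟩ := ht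
    rw [hσ s]
    exact hasDerivAt_comp_invFun hτ (fun s => (hc₀ s).ne') hτ_mono.injective hy s
  refine ⟨Function.invFun τ, by simpa [hτ0] using hσ 0, ?_⟩
  by_cases hbdd : BddAbove (range τ)
  · have hlt (s : ℝ) : τ s < sSup (range τ) :=
      (hτ_mono (lt_add_one s)).trans_le (le_csSup hbdd ⟨s + 1, rfl⟩)
    have hT : 0 < sSup (range τ) := hτ0 ▸ hlt 0
    have hmem {t : ℝ} (ht₀ : 0 ≤ t) (htT : t < sSup (range τ)) : t ∈ range τ := by
      obtain ⟨_, ⟨s, rfl⟩, hs⟩ := exists_lt_of_lt_csSup (range_nonempty τ) htT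
      exact hrange ht₀ hs
    refine Or.inr ⟨_, hT, fun t ht₀ htT => hderiv (hmem ht₀ htT),
      tendsto_invFun_atTop hτ_mono ?_ fun b => ?_⟩
    · filter_upwards [Ioo_mem_nhdsLT hT] with t ht using hmem ht.1.le ht.2
    · filter_upwards [Ioo_mem_nhdsLT (hlt b)] with t ht using ht.1.le
  · rw [not_bddAbove_iff] at hbdd
    have hmem {t : ℝ} (ht : 0 ≤ t) : t ∈ range τ := by
      obtain ⟨_, ⟨s, rfl⟩, hs⟩ := hbdd t
      exact hrange ht hs
    refine Or.inl ⟨fun t ht => hderiv (hmem ht), tendsto_invFun_atTop hτ_mono ?_ fun b => ?_⟩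
    · filter_upwards [eventually_ge_atTop 0] with t ht using hmem ht
    · exact eventually_ge_atTop (τ b)

end TimeChange

theorem eq_zero_of_tendsto_of_tendsto_deriv {u u' : ℝ → ℝ} {a l : ℝ}
    (hu : ∀ s, HasDerivAt u (u' s) s) (hua : Tendsto u atTop (𝓝 a))
    (hu'l : Tendsto u' atTop (𝓝 l)) : l = 0 := by
  have hmvt (s : ℝ) : ∃ ξ ∈ Ioo s (s + 1), u' ξ = (u (s + 1) - u s) / (s + 1 - s) :=
    exists_hasDerivAt_eq_slope u u' (lt_add_one s)
      (continuous_iff_continuousAt.2 fun s => (hu s).continuousAt).continuousOn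
      (fun s _ => hu s)
  choose ξ hξ hξu using hmvt
  have hξ_top : Tendsto ξ atTop atTop :=
    tendsto_atTop_mono (fun s => (hξ s).1.le) tendsto_id
  have hdiff : Tendsto (fun s => (u (s + 1) - u s) / (s + 1 - s)) atTop (𝓝 ((a - a) / 1)) := by
    simp only [add_sub_cancel_left]
    exact ((hua.comp (tendsto_atTop_add_const_right _ 1 tendsto_id)).sub hua).div_const 1
  rw [sub_self, zero_div] at hdiff
  exact tendsto_nhds_unique (hu'l.comp hξ_top) (hdiff.congr fun s => (hξu s).symm)

theorem HasDerivAt.fst {y : ℝ → ℝ × ℝ} {w : ℝ × ℝ} {s : ℝ} (h : HasDerivAt y w s) :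
    HasDerivAt (fun s => (y s).1) w.1 s :=
  (ContinuousLinearMap.fst ℝ ℝ ℝ).hasFDerivAt.comp_hasDerivAt s h

theorem HasDerivAt.snd {y : ℝ → ℝ × ℝ} {w : ℝ × ℝ} {s : ℝ} (h : HasDerivAt y w s) :
    HasDerivAt (fun s => (y s).2) w.2 s :=
  (ContinuousLinearMap.snd ℝ ℝ ℝ).hasFDerivAt.comp_hasDerivAt s h

theorem eq_zero_of_tendsto_of_hasDerivAt {G : ℝ × ℝ → ℝ × ℝ} (hG : Continuous G)
    {y : ℝ → ℝ × ℝ} (hy : ∀ s, HasDerivAt y (G (y s)) s) {p : ℝ × ℝ}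
    (hp : Tendsto y atTop (𝓝 p)) : G p = 0 := by
  have hGp := (hG.tendsto p).comp hp
  exact Prod.ext (eq_zero_of_tendsto_of_tendsto_deriv (fun s => (hy s).fst) hp.fst_nhds
      hGp.fst_nhds) (eq_zero_of_tendsto_of_tendsto_deriv (fun s => (hy s).snd) hp.snd_nhds
      hGp.snd_nhds)

theorem monotoneOn_Ici_of_hasDerivAt {u u' : ℝ → ℝ} (hu : ∀ s, HasDerivAt u (u' s) s) {s₀ : ℝ}
    (hu' : ∀ s, s₀ ≤ s → 0 ≤ u' s) : MonotoneOn u (Ici s₀) :=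
  monotoneOn_of_hasDerivWithinAt_nonneg (convex_Ici s₀)
    (fun s _ => (hu s).continuousAt.continuousWithinAt) (fun s _ => (hu s).hasDerivWithinAt)
    fun s hs => hu' s (interior_subset hs)

theorem MonotoneOn.tendsto_atTop_or_tendsto_nhds {u : ℝ → ℝ} {s₀ : ℝ}
    (hu : MonotoneOn u (Ici s₀)) : Tendsto u atTop atTop ∨ ∃ a, Tendsto u atTop (𝓝 a) := by
  have hmono : Monotone fun s => u (max s s₀) := fun s t hst =>
    hu (le_max_right s s₀) (le_max_right t s₀) (max_le_max hst le_rfl)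
  have heq : (fun s => u (max s s₀)) =ᶠ[atTop] u := by
    filter_upwards [eventually_ge_atTop s₀] with s hs
    rw [max_eq_left hs]
  rcases tendsto_atTop_of_monotone hmono with h | ⟨a, ha⟩
  · exact Or.inl (h.congr' heq)
  · exact Or.inr ⟨a, ha.congr' heq⟩

theorem MonotoneOn.le_of_tendsto {u : ℝ → ℝ} {s₀ a : ℝ} (hu : MonotoneOn u (Ici s₀))
    (ha : Tendsto u atTop (𝓝 a)) {s : ℝ} (hs : s₀ ≤ s) : u s ≤ a :=
  ge_of_tendsto ha ((eventually_ge_atTop s).mono fun _ ht => hu hs (hs.trans ht) ht)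

theorem eq_mul_exp_integral_of_hasDerivAt {u h : ℝ → ℝ} (hh : Continuous h)
    (hu : ∀ s, HasDerivAt u (h s * u s) s) (s : ℝ) :
    u s = u 0 * Real.exp (∫ r in (0 : ℝ)..s, h r) := by
  set H : ℝ → ℝ := fun s => ∫ r in (0 : ℝ)..s, h r
  have hH (s : ℝ) : HasDerivAt H (h s) s := (hh.integral_hasStrictDerivAt 0 s).hasDerivAt
  have hconst (s : ℝ) : HasDerivAt (fun s => u s * Real.exp (-H s)) 0 s :=
    ((hu s).fun_mul (hH s).neg.exp).congr_deriv (by ring)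
  have := is_const_of_deriv_eq_zero (fun s => (hconst s).differentiableAt)
    (fun s => (hconst s).deriv) s 0
  simp only [H, intervalIntegral.integral_same, neg_zero, Real.exp_zero, mul_one] at this
  rw [← this, mul_assoc, ← Real.exp_add, neg_add_cancel, Real.exp_zero, mul_one]

theorem nonneg_of_hasDerivAt_pos_of_eq_zero {φ φ' : ℝ → ℝ} (hφ : ∀ s, HasDerivAt φ (φ' s) s)
    (hφ' : ∀ s, φ s = 0 → 0 < φ' s) {s₀ : ℝ} (h₀ : 0 ≤ φ s₀) {s : ℝ} (hs : s₀ ≤ s) :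
    0 ≤ φ s := by
  have := image_le_of_deriv_right_lt_deriv_boundary (f := fun s => -φ s) (f' := fun s => -φ' s)
    (B := fun _ => 0) (B' := fun _ => 0)
    (fun s _ => (hφ s).neg.continuousAt.continuousWithinAt)
    (fun s _ => (hφ s).neg.hasDerivWithinAt) (by simpa using h₀) (fun _ => hasDerivAt_const _ _)
    (fun s _ hs => by simpa using hφ' s (neg_eq_zero.1 hs)) ⟨hs, le_rfl⟩
  simpa using this

theorem pos_and_pos_of_one_lt_mul {β γ : ℝ} (hβ : 0 < 1 + β) (hγ : 0 < 1 + γ)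
    (hβγ : 1 < β * γ) : 0 < β ∧ 0 < γ := by
  constructor <;> by_contra! h <;> nlinarith

theorem contDiff_lv2 (α₁ α₂ β γ : ℝ) : ContDiff ℝ 1 (lv2 α₁ α₂ β γ) := by
  unfold lv2; fun_prop

theorem nullcline_pos_or {β γ : ℝ} (hβ : 0 < β) (hβγ : 1 < β * γ) {p : ℝ × ℝ}
    (hp : 0 ≤ p.1) : 0 < 1 - p.1 + β * p.2 ∨ 0 < 1 - p.2 + γ * p.1 := by
  by_contra! h
  nlinarith [h.1, h.2]

theorem nullcline_eq_zero_of_lv2_eq_zero {α₁ α₂ β γ : ℝ} (hα₁ : α₁ ≠ 0) {p : ℝ × ℝ}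
    (h : lv2 α₁ α₂ β γ p = 0) (hp : p.1 ≠ 0) : 1 - p.1 + β * p.2 = 0 := by
  have := congrArg Prod.fst h
  simp only [lv2, Prod.fst_zero, mul_eq_zero] at this
  tauto

theorem eq_of_lv2_eq_zero {α₁ α₂ β γ : ℝ} (hα₁ : α₁ ≠ 0) (hα₂ : α₂ ≠ 0) (hβ : 0 < β)
    (hβγ : 1 < β * γ) {p : ℝ × ℝ} (hp : 0 ≤ p.1) (h : lv2 α₁ α₂ β γ p = 0) :
    p = (0, 0) ∨ p = (1, 0) ∨ p = (0, 1) := by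
  have hN := nullcline_pos_or hβ hβγ hp
  obtain ⟨p₁, p₂⟩ := p
  simp only [lv2, Prod.ext_iff, Prod.fst_zero, Prod.snd_zero, mul_eq_zero, hα₁, hα₂,
    false_or] at h hN ⊢
  rcases h with ⟨rfl | h₁, rfl | h₂⟩
  · simp
  · right; right; constructor <;> linarith
  · right; left; constructor <;> linarith
  · rcases hN with hN | hN <;> linarith

theorem abs_mul_one_sub_add_mul_le (a b c : ℝ) :
    |a * (1 - a + c * b)| ≤ (2 + |c|) * (1 + a ^ 2 + b ^ 2) := by
  have h₁ : |1 - a + c * b| ≤ 1 + |a| + |c| * |b| := by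
    calc |1 - a + c * b| ≤ |1 - a| + |c * b| := abs_add_le _ _
      _ ≤ 1 + |a| + |c| * |b| := by
        rw [abs_mul]
        gcongr
        exact (abs_sub _ _).trans_eq (by rw [abs_one])
  have h₂ : |a| ≤ 1 + a ^ 2 := by nlinarith [sq_abs a, sq_nonneg (|a| - 1)]
  have h₃ : |a| * |b| ≤ 1 + a ^ 2 + b ^ 2 := by
    nlinarith [sq_nonneg (|a| - |b|), sq_abs a, sq_abs b]
  calc |a * (1 - a + c * b)| ≤ |a| * (1 + |a| + |c| * |b|) := by
        rw [abs_mul]; gcongr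
    _ = |a| + a ^ 2 + |c| * (|a| * |b|) := by rw [← sq_abs a]; ring
    _ ≤ (2 + |c|) * (1 + a ^ 2 + b ^ 2) := by nlinarith [abs_nonneg c, sq_nonneg b]

theorem norm_smul_lv2_le (α₁ α₂ β γ : ℝ) (p : ℝ × ℝ) :
    ‖(1 + p.1 ^ 2 + p.2 ^ 2)⁻¹ • lv2 α₁ α₂ β γ p‖ ≤ |α₁| * (2 + |β|) + |α₂| * (2 + |γ|) := by
  have hp : 0 < 1 + p.1 ^ 2 + p.2 ^ 2 := by positivity
  rw [norm_smul, Real.norm_of_nonneg (inv_nonneg.2 hp.le), inv_mul_le_iff₀ hp, mul_comm,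
    Prod.norm_def]
  have h₁ := abs_mul_one_sub_add_mul_le p.1 p.2 β
  have h₂ := abs_mul_one_sub_add_mul_le p.2 p.1 γ
  have hA : 0 ≤ |α₁| * (2 + |β|) := by positivity
  have hB : 0 ≤ |α₂| * (2 + |γ|) := by positivity
  simp only [lv2, Real.norm_eq_abs, mul_assoc α₁, mul_assoc α₂, abs_mul α₁, abs_mul α₂]
  refine max_le ?_ ?_
  · nlinarith [mul_le_mul_of_nonneg_left h₁ (abs_nonneg α₁)]
  · nlinarith [mul_le_mul_of_nonneg_left h₂ (abs_nonneg α₂)]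

structure IsLV2CurveWithSpeed (α₁ α₂ β γ : ℝ) (g : ℝ × ℝ → ℝ) (y : ℝ → ℝ × ℝ) : Prop where
  continuous_speed : Continuous g
  speed_pos : ∀ p, 0 < g p
  hasDerivAt : ∀ s, HasDerivAt y (g (y s) • lv2 α₁ α₂ β γ (y s)) s

namespace IsLV2CurveWithSpeed

variable {α₁ α₂ β γ : ℝ} {g : ℝ × ℝ → ℝ} {y : ℝ → ℝ × ℝ}

theorem swap (hy : IsLV2CurveWithSpeed α₁ α₂ β γ g y) :
    IsLV2CurveWithSpeed α₂ α₁ γ β (g ∘ Prod.swap) fun s => (y s).swap where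
  continuous_speed := hy.continuous_speed.comp continuous_swap
  speed_pos p := hy.speed_pos p.swap
  hasDerivAt s := (hy.hasDerivAt s).snd.prodMk (hy.hasDerivAt s).fst

theorem continuous (hy : IsLV2CurveWithSpeed α₁ α₂ β γ g y) : Continuous y :=
  continuous_iff_continuousAt.2 fun s => (hy.hasDerivAt s).continuousAt

theorem hasDerivAt_fst (hy : IsLV2CurveWithSpeed α₁ α₂ β γ g y) (s : ℝ) :
    HasDerivAt (fun s => (y s).1) (g (y s) * α₁ * (y s).1 * (1 - (y s).1 + β * (y s).2)) s := by
  convert (hy.hasDerivAt s).fst using 1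
  simp only [lv2, Prod.smul_fst, smul_eq_mul]
  ring

theorem hasDerivAt_snd (hy : IsLV2CurveWithSpeed α₁ α₂ β γ g y) (s : ℝ) :
    HasDerivAt (fun s => (y s).2) (g (y s) * α₂ * (y s).2 * (1 - (y s).2 + γ * (y s).1)) s :=
  hy.swap.hasDerivAt_fst s

theorem fst_pos (hy : IsLV2CurveWithSpeed α₁ α₂ β γ g y) (h₀ : 0 < (y 0).1) (s : ℝ) :
    0 < (y s).1 := by
  have hyc := hy.continuous
  have hgc := hy.continuous_speed
  rw [eq_mul_exp_integral_of_hasDerivAt (h := fun s => g (y s) * α₁ * (1 - (y s).1 + β * (y s).2))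
    (by fun_prop) (fun s => (hy.hasDerivAt_fst s).congr_deriv (by ring)) s]
  positivity

theorem lv2_eq_zero_of_tendsto (hy : IsLV2CurveWithSpeed α₁ α₂ β γ g y) {a b : ℝ}
    (ha : Tendsto (fun s => (y s).1) atTop (𝓝 a)) (hb : Tendsto (fun s => (y s).2) atTop (𝓝 b)) :
    lv2 α₁ α₂ β γ (a, b) = 0 := by
  have := eq_zero_of_tendsto_of_hasDerivAt
    (hy.continuous_speed.smul (contDiff_lv2 α₁ α₂ β γ).continuous) hy.hasDerivAt (ha.prodMk_nhds hb)
  exact (smul_eq_zero.1 this).resolve_left (hy.speed_pos _).ne'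

theorem nullcline_fst_nonneg (hy : IsLV2CurveWithSpeed α₁ α₂ β γ g y) (hα₂ : 0 < α₂)
    (hβ : 0 < β) (hβγ : 1 < β * γ) (hu : ∀ s, 0 < (y s).1) (hv : ∀ s, 0 < (y s).2) {s₀ : ℝ}
    (h₀ : 0 ≤ 1 - (y s₀).1 + β * (y s₀).2) {s : ℝ} (hs : s₀ ≤ s) :
    0 ≤ 1 - (y s).1 + β * (y s).2 := by
  refine nonneg_of_hasDerivAt_pos_of_eq_zero (φ := fun s => 1 - (y s).1 + β * (y s).2)
    (fun s => ((hy.hasDerivAt_fst s).const_sub 1).fun_add ((hy.hasDerivAt_snd s).const_mul β))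
    (fun s (hP : 1 - (y s).1 + β * (y s).2 = 0) => ?_) h₀ hs
  have hQ := (nullcline_pos_or hβ hβγ (hu s).le).resolve_left hP.not_gt
  rw [hP, mul_zero, neg_zero, zero_add]
  exact mul_pos hβ (mul_pos (mul_pos (mul_pos (hy.speed_pos _) hα₂) (hv s)) hQ)

theorem exists_nullcline_snd_nonneg (hy : IsLV2CurveWithSpeed α₁ α₂ β γ g y) (hα₁ : 0 < α₁)
    (hα₂ : 0 < α₂) (hβ : 0 < β) (hγ : 0 < γ) (hβγ : 1 < β * γ) (hu : ∀ s, 0 < (y s).1)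
    (hv : ∀ s, 0 < (y s).2) {s₀ : ℝ} (h₀ : 0 ≤ 1 - (y s₀).1 + β * (y s₀).2) :
    ∃ s₁, s₀ ≤ s₁ ∧ 0 ≤ 1 - (y s₁).2 + γ * (y s₁).1 := by
  by_contra! hQ
  have hP {s : ℝ} (hs : s₀ ≤ s) := hy.nullcline_fst_nonneg hα₂ hβ hβγ hu hv h₀ hs
  have hu_mono : MonotoneOn (fun s => (y s).1) (Ici s₀) :=
    monotoneOn_Ici_of_hasDerivAt hy.hasDerivAt_fst fun s hs =>
      mul_nonneg (mul_pos (mul_pos (hy.speed_pos _) hα₁) (hu s)).le (hP hs)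
  have hv_anti : MonotoneOn (fun s => -(y s).2) (Ici s₀) :=
    monotoneOn_Ici_of_hasDerivAt (fun s => (hy.hasDerivAt_snd s).neg) fun s hs =>
      neg_nonneg.2 (mul_nonpos_of_nonneg_of_nonpos
        (mul_pos (mul_pos (hy.speed_pos _) hα₂) (hv s)).le (hQ s hs).le)
  obtain ⟨b, hb⟩ : ∃ b, Tendsto (fun s => (y s).2) atTop (𝓝 b) := by
    rcases hv_anti.tendsto_atTop_or_tendsto_nhds with h | ⟨b, hb⟩
    · obtain ⟨s, hs⟩ := (h.eventually_gt_atTop 0).exists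
      exact absurd (hv s) (by linarith)
    · exact ⟨-b, by simpa using hb.neg⟩
  obtain ⟨a, ha⟩ : ∃ a, Tendsto (fun s => (y s).1) atTop (𝓝 a) := by
    refine hu_mono.tendsto_atTop_or_tendsto_nhds.resolve_left fun h => ?_
    obtain ⟨s, hus, hvs, hs⟩ := ((h.eventually_gt_atTop ((b + 1) / γ)).and
      ((hb.eventually (gt_mem_nhds (lt_add_one b))).and (eventually_ge_atTop s₀))).exists
    rw [div_lt_iff₀ hγ] at hus
    linarith [hQ s hs]
  have hlv2 := hy.lv2_eq_zero_of_tendsto ha hb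
  have hPa := nullcline_eq_zero_of_lv2_eq_zero hα₁.ne' hlv2
    ((hu s₀).trans_le (hu_mono.le_of_tendsto ha le_rfl)).ne'
  have hQb : 1 - b + γ * a ≤ 0 :=
    le_of_tendsto ((tendsto_const_nhds.sub hb).add (ha.const_mul γ))
      ((eventually_ge_atTop s₀).mono fun s hs => (hQ s hs).le)
  rcases nullcline_pos_or hβ hβγ (p := (a, b)) (ge_of_tendsto' ha fun s => (hu s).le) with h | h
  · exact h.ne' hPa
  · exact h.not_ge hQb

theorem exists_forall_nullclines_nonneg (hy : IsLV2CurveWithSpeed α₁ α₂ β γ g y)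
    (hα₁ : 0 < α₁) (hα₂ : 0 < α₂) (hβ : 0 < β) (hγ : 0 < γ) (hβγ : 1 < β * γ)
    (hu : ∀ s, 0 < (y s).1) (hv : ∀ s, 0 < (y s).2) {s₀ : ℝ}
    (h₀ : 0 ≤ 1 - (y s₀).1 + β * (y s₀).2) :
    ∃ s₁, ∀ s, s₁ ≤ s → 0 ≤ 1 - (y s).1 + β * (y s).2 ∧ 0 ≤ 1 - (y s).2 + γ * (y s).1 := by
  obtain ⟨s₁, hs₁, h₁⟩ := hy.exists_nullcline_snd_nonneg hα₁ hα₂ hβ hγ hβγ hu hv h₀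
  exact ⟨s₁, fun s hs => ⟨hy.nullcline_fst_nonneg hα₂ hβ hβγ hu hv h₀ (hs₁.trans hs),
    hy.swap.nullcline_fst_nonneg hα₁ hγ (mul_comm β γ ▸ hβγ) hv hu h₁ hs⟩⟩

theorem tendsto_fst_atTop (hy : IsLV2CurveWithSpeed α₁ α₂ β γ g y) (hα₁ : 0 < α₁)
    (hα₂ : 0 < α₂) (hβ : 0 < β) (hβγ : 1 < β * γ) (hu : ∀ s, 0 < (y s).1)
    (hv : ∀ s, 0 < (y s).2) {s₀ : ℝ}
    (hW : ∀ s, s₀ ≤ s → 0 ≤ 1 - (y s).1 + β * (y s).2 ∧ 0 ≤ 1 - (y s).2 + γ * (y s).1) :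
    Tendsto (fun s => (y s).1) atTop atTop := by
  have hu_mono : MonotoneOn (fun s => (y s).1) (Ici s₀) :=
    monotoneOn_Ici_of_hasDerivAt hy.hasDerivAt_fst fun s hs =>
      mul_nonneg (mul_pos (mul_pos (hy.speed_pos _) hα₁) (hu s)).le (hW s hs).1
  have hv_mono : MonotoneOn (fun s => (y s).2) (Ici s₀) :=
    monotoneOn_Ici_of_hasDerivAt hy.hasDerivAt_snd fun s hs =>
      mul_nonneg (mul_pos (mul_pos (hy.speed_pos _) hα₂) (hv s)).le (hW s hs).2
  refine hu_mono.tendsto_atTop_or_tendsto_nhds.resolve_right fun ⟨a, ha⟩ => ?_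
  obtain ⟨b, hb⟩ : ∃ b, Tendsto (fun s => (y s).2) atTop (𝓝 b) := by
    refine hv_mono.tendsto_atTop_or_tendsto_nhds.resolve_left fun h => ?_
    obtain ⟨s, hvs, hus, hs⟩ := ((h.eventually_gt_atTop (1 + γ * (a + 1))).and
      ((ha.eventually (gt_mem_nhds (lt_add_one a))).and (eventually_ge_atTop s₀))).exists
    nlinarith [(hW s hs).2]
  have hlv2 := hy.lv2_eq_zero_of_tendsto ha hb
  have hPa := nullcline_eq_zero_of_lv2_eq_zero hα₁.ne' hlv2
    ((hu s₀).trans_le (hu_mono.le_of_tendsto ha le_rfl)).ne'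
  have hQb := nullcline_eq_zero_of_lv2_eq_zero (α₂ := α₁) (β := γ) (γ := β) (p := (b, a))
    hα₂.ne' (congrArg Prod.swap hlv2)
    ((hv s₀).trans_le (hv_mono.le_of_tendsto hb le_rfl)).ne'
  rcases nullcline_pos_or hβ hβγ (p := (a, b)) (ge_of_tendsto' ha fun s => (hu s).le) with h | h
  · exact h.ne' hPa
  · exact h.ne' hQb

theorem tendsto_atTop (hy : IsLV2CurveWithSpeed α₁ α₂ β γ g y) (hα₁ : 0 < α₁)
    (hα₂ : 0 < α₂) (hβ : 0 < β) (hγ : 0 < γ) (hβγ : 1 < β * γ) (h₁ : 0 < (y 0).1)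
    (h₂ : 0 < (y 0).2) :
    Tendsto (fun s => (y s).1) atTop atTop ∧ Tendsto (fun s => (y s).2) atTop atTop := by
  have hγβ : 1 < γ * β := mul_comm β γ ▸ hβγ
  have hu := hy.fst_pos h₁
  have hv := hy.swap.fst_pos h₂
  obtain ⟨s₀, hW⟩ : ∃ s₀, ∀ s, s₀ ≤ s →
      0 ≤ 1 - (y s).1 + β * (y s).2 ∧ 0 ≤ 1 - (y s).2 + γ * (y s).1 := by
    rcases nullcline_pos_or hβ hβγ (hu 0).le with h₀ | h₀
    · exact hy.exists_forall_nullclines_nonneg hα₁ hα₂ hβ hγ hβγ hu hv h₀.le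
    · obtain ⟨s₀, hW⟩ := hy.swap.exists_forall_nullclines_nonneg hα₂ hα₁ hγ hβ hγβ hv hu h₀.le
      exact ⟨s₀, fun s hs => (hW s hs).symm⟩
  exact ⟨hy.tendsto_fst_atTop hα₁ hα₂ hβ hβγ hu hv hW,
    hy.swap.tendsto_fst_atTop hα₂ hα₁ hγ hγβ hv hu fun s hs => (hW s hs).symm⟩

end IsLV2CurveWithSpeed

theorem exists_isLV2CurveWithSpeed (α₁ α₂ β γ : ℝ) (x₀ : ℝ × ℝ) :
    ∃ y, y 0 = x₀ ∧ IsLV2CurveWithSpeed α₁ α₂ β γ (fun p => (1 + p.1 ^ 2 + p.2 ^ 2)⁻¹) y := by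
  have hden : ContDiff ℝ 1 fun p : ℝ × ℝ => 1 + p.1 ^ 2 + p.2 ^ 2 := by fun_prop
  obtain ⟨y, hy0, hy⟩ := exists_forall_hasDerivAt_of_bounded
    ((hden.inv fun p => by positivity).smul (contDiff_lv2 α₁ α₂ β γ)).locallyLipschitz
    (norm_smul_lv2_le α₁ α₂ β γ) x₀
  exact ⟨y, hy0, hden.continuous.inv₀ fun p => by positivity, fun p => by positivity, hy⟩

/-- (Case (d) of the planar LV theorem.)  If `α₁, α₂ > 0`, `1 + β₁ > 0`,
`1 + γ₂ > 0` and `β₁ γ₂ > 1`, then (i) the only equilibria in the closed quadrant are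
`(0,0)`, `ξ₁ = (1,0)` and `ξ₂ = (0,1)`; and (ii) for every `x₀` in the open positive
quadrant the maximal solution through `x₀` stays in the open quadrant and both components
tend to `+∞` at the right endpoint of its maximal interval of existence (either `+∞`, or a
finite blow-up time `T`). -/
theorem lv2_case_d
    (α₁ α₂ β₁ γ₂ : ℝ) (hα₁ : 0 < α₁) (hα₂ : 0 < α₂)
    (hβ : 0 < 1 + β₁) (hγ : 0 < 1 + γ₂) (hbg : 1 < β₁ * γ₂) :
    (∀ p : ℝ × ℝ, 0 ≤ p.1 → 0 ≤ p.2 → lv2 α₁ α₂ β₁ γ₂ p = 0 →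
      p = ((0 : ℝ), (0 : ℝ)) ∨ p = ((1 : ℝ), (0 : ℝ)) ∨ p = ((0 : ℝ), (1 : ℝ))) ∧
    (∀ x₀ : ℝ × ℝ, 0 < x₀.1 → 0 < x₀.2 →
      ∃ x : ℝ → ℝ × ℝ, x 0 = x₀ ∧
        (((∀ τ : ℝ, 0 ≤ τ → HasDerivAt x (lv2 α₁ α₂ β₁ γ₂ (x τ)) τ) ∧
          (∀ τ : ℝ, 0 ≤ τ → 0 < (x τ).1 ∧ 0 < (x τ).2) ∧
          Tendsto (fun τ => (x τ).1) atTop atTop ∧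
          Tendsto (fun τ => (x τ).2) atTop atTop) ∨
         (∃ T : ℝ, 0 < T ∧
          (∀ τ : ℝ, 0 ≤ τ → τ < T → HasDerivAt x (lv2 α₁ α₂ β₁ γ₂ (x τ)) τ) ∧
          (∀ τ : ℝ, 0 ≤ τ → τ < T → 0 < (x τ).1 ∧ 0 < (x τ).2) ∧
          Tendsto (fun τ => (x τ).1) (nhdsWithin T (Set.Iio T)) atTop ∧
          Tendsto (fun τ => (x τ).2) (nhdsWithin T (Set.Iio T)) atTop))) := by
  obtain ⟨hβ₁, hγ₂⟩ := pos_and_pos_of_one_lt_mul hβ hγ hbg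
  refine ⟨fun p hp₁ _ hp => eq_of_lv2_eq_zero hα₁.ne' hα₂.ne' hβ₁ hbg hp₁ hp,
    fun x₀ h₁ h₂ => ?_⟩
  obtain ⟨y, hy0, hy⟩ := exists_isLV2CurveWithSpeed α₁ α₂ β₁ γ₂ x₀
  have hpos (s : ℝ) : 0 < (y s).1 ∧ 0 < (y s).2 :=
    ⟨hy.fst_pos (hy0 ▸ h₁) s, hy.swap.fst_pos (hy0 ▸ h₂) s⟩
  obtain ⟨hu, hv⟩ := hy.tendsto_atTop hα₁ hα₂ hβ₁ hγ₂ hbg (hpos 0).1 (hpos 0).2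
  obtain ⟨σ, hσ0, hσ⟩ := exists_reparametrization
    (hy.continuous_speed.comp hy.continuous) (fun s => hy.speed_pos (y s)) hy.hasDerivAt
  refine ⟨y ∘ σ, by simp [hσ0, hy0], ?_⟩
  rcases hσ with ⟨hderiv, hσ⟩ | ⟨T, hT, hderiv, hσ⟩
  · exact Or.inl ⟨hderiv, fun τ _ => hpos (σ τ), hu.comp hσ, hv.comp hσ⟩
  · exact Or.inr ⟨T, hT, hderiv, fun τ _ _ => hpos (σ τ), hu.comp hσ, hv.comp hσ⟩
end

section
/- Let β₁, β₂, β₃, γ₁, γ₂, γ₃ be real numbers satisfying 1−β₂γ₃+β₁(1+β₂)+γ₁(1+γ₃) < 0 and 1−β₁γ₂+β₃(1+β₁)+γ₃(1+γ₂) > 0. Then the linear system x₁ − β₁x₂ − γ₁x₃ = 1, x₂ − β₂x₃ − γ₂x₁ = 1, x₃ − β₃x₁ − γ₃x₂ = 1 has no solution with x₁ > 0, x₂ > 0 and x₃ > 0. Consequently, the system ẋ₁ = α₁x₁(1−x₁+β₁x₂+γ₁x₃), ẋ₂ = α₂x₂(1−x₂+β₂x₃+γ₂x₁), ẋ₃ =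 α₃x₃(1−x₃+β₃x₁+γ₃x₂) (with any α₁, α₂, α₃ > 0) has no equilibrium in the open octant ℝ³₊. -/
/-- The three-dimensional generalised Lotka–Volterra vector field
`ẋ₁ = α₁ x₁ (1 − x₁ + β₁ x₂ + γ₁ x₃)`, `ẋ₂ = α₂ x₂ (1 − x₂ + β₂ x₃ + γ₂ x₁)`,
`ẋ₃ = α₃ x₃ (1 − x₃ + β₃ x₁ + γ₃ x₂)`. -/
def lv3 (α₁ α₂ α₃ β₁ β₂ β₃ γ₁ γ₂ γ₃ : ℝ) : ℝ × ℝ × ℝ → ℝ × ℝ × ℝ := fun x =>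
  (α₁ * x.1 * (1 - x.1 + β₁ * x.2.1 + γ₁ * x.2.2),
   α₂ * x.2.1 * (1 - x.2.1 + β₂ * x.2.2 + γ₂ * x.1),
   α₃ * x.2.2 * (1 - x.2.2 + β₃ * x.1 + γ₃ * x.2.1))

/-!
By Cramer's rule, a solution `x` of the linear system `A x = (1, 1, 1)` satisfies `det A · x₁ = N₁` and `det A · x₃ = N₃`,
where `N₁, N₃` are the two quantities in the hypotheses. If `x₁, x₃ > 0`, both `N₁` and `N₃`
have the sign of `det A`, which is impossible when `N₁ < 0 < N₃`. At an interior equilibrium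
the factors `αᵢ xᵢ` are nonzero, so the equilibrium solves the linear system.
-/

open Matrix

theorem Matrix.cramer_mulVec {n α : Type*} [Fintype n] [DecidableEq n] [CommRing α]
    (A : Matrix n n α) (x : n → α) : A.cramer (A *ᵥ x) = A.det • x := by
  rw [cramer_eq_adjugate_mulVec, mulVec_mulVec, adjugate_mul, smul_mulVec, one_mulVec]

theorem Matrix.sign_cramer_eq_sign_det {n α : Type*} [Fintype n] [DecidableEq n] [CommRing α]
    [LinearOrder α] [IsStrictOrderedRing α] {A : Matrix n n α} {x b : n → α} (hx : A *ᵥ x = b)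
    {i : n} (hi : 0 < x i) : SignType.sign (A.cramer b i) = SignType.sign A.det := by
  rw [← hx, cramer_mulVec, Pi.smul_apply, smul_eq_mul, sign_mul, sign_pos hi, mul_one]

def lv3Matrix (β₁ β₂ β₃ γ₁ γ₂ γ₃ : ℝ) : Matrix (Fin 3) (Fin 3) ℝ :=
  !![1, -β₁, -γ₁; -γ₂, 1, -β₂; -β₃, -γ₃, 1]

section
variable (β₁ β₂ β₃ γ₁ γ₂ γ₃ : ℝ)

theorem lv3Matrix_mulVec_eq_one_iff (x₁ x₂ x₃ : ℝ) :
    lv3Matrix β₁ β₂ β₃ γ₁ γ₂ γ₃ *ᵥ ![x₁, x₂, x₃] = 1 ↔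
      x₁ - β₁ * x₂ - γ₁ * x₃ = 1 ∧ x₂ - β₂ * x₃ - γ₂ * x₁ = 1 ∧ x₃ - β₃ * x₁ - γ₃ * x₂ = 1 := by
  simp [lv3Matrix, funext_iff, Fin.forall_fin_succ]
  ring_nf

theorem lv3Matrix_cramer_one_zero :
    (lv3Matrix β₁ β₂ β₃ γ₁ γ₂ γ₃).cramer 1 0 = 1 - β₂ * γ₃ + β₁ * (1 + β₂) + γ₁ * (1 + γ₃) := by
  simp [lv3Matrix, cramer_apply, det_fin_three]
  ring

theorem lv3Matrix_cramer_one_two :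
    (lv3Matrix β₁ β₂ β₃ γ₁ γ₂ γ₃).cramer 1 2 = 1 - β₁ * γ₂ + β₃ * (1 + β₁) + γ₃ * (1 + γ₂) := by
  simp [lv3Matrix, cramer_apply, det_fin_three]
  ring

end

theorem lv3_eq_zero_iff {α₁ α₂ α₃ : ℝ} (hα₁ : α₁ ≠ 0) (hα₂ : α₂ ≠ 0) (hα₃ : α₃ ≠ 0)
    (β₁ β₂ β₃ γ₁ γ₂ γ₃ : ℝ) {x : ℝ × ℝ × ℝ} (hx₁ : x.1 ≠ 0) (hx₂ : x.2.1 ≠ 0) (hx₃ : x.2.2 ≠ 0) :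
    lv3 α₁ α₂ α₃ β₁ β₂ β₃ γ₁ γ₂ γ₃ x = 0 ↔
      x.1 - β₁ * x.2.1 - γ₁ * x.2.2 = 1 ∧ x.2.1 - β₂ * x.2.2 - γ₂ * x.1 = 1 ∧
        x.2.2 - β₃ * x.1 - γ₃ * x.2.1 = 1 := by
  simp only [lv3, Prod.mk_eq_zero, mul_eq_zero, hα₁, hα₂, hα₃, hx₁, hx₂, hx₃, false_or]
  constructor <;> rintro ⟨h₁, h₂, h₃⟩ <;> refine ⟨?_, ?_, ?_⟩ <;> linarith

/-- If `1 − β₂γ₃ + β₁(1+β₂) + γ₁(1+γ₃) < 0` and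
`1 − β₁γ₂ + β₃(1+β₁) + γ₃(1+γ₂) > 0`, then the linear system
`x₁ − β₁x₂ − γ₁x₃ = 1`, `x₂ − β₂x₃ − γ₂x₁ = 1`, `x₃ − β₃x₁ − γ₃x₂ = 1` has no positive
solution; consequently the corresponding Lotka–Volterra system (for any `α₁, α₂, α₃ > 0`)
has no equilibrium in the open positive octant. -/
theorem lv3_no_interior_equilibrium
    (β₁ β₂ β₃ γ₁ γ₂ γ₃ : ℝ)
    (h1 : 1 - β₂ * γ₃ + β₁ * (1 + β₂) + γ₁ * (1 + γ₃) < 0)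
    (h2 : 0 < 1 - β₁ * γ₂ + β₃ * (1 + β₁) + γ₃ * (1 + γ₂)) :
    (¬ ∃ x₁ x₂ x₃ : ℝ, 0 < x₁ ∧ 0 < x₂ ∧ 0 < x₃ ∧
        x₁ - β₁ * x₂ - γ₁ * x₃ = 1 ∧
        x₂ - β₂ * x₃ - γ₂ * x₁ = 1 ∧
        x₃ - β₃ * x₁ - γ₃ * x₂ = 1) ∧
    (∀ α₁ α₂ α₃ : ℝ, 0 < α₁ → 0 < α₂ → 0 < α₃ →
      ¬ ∃ x : ℝ × ℝ × ℝ, 0 < x.1 ∧ 0 < x.2.1 ∧ 0 < x.2.2 ∧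
          lv3 α₁ α₂ α₃ β₁ β₂ β₃ γ₁ γ₂ γ₃ x = 0) := by
  have linear : ¬ ∃ x₁ x₂ x₃ : ℝ, 0 < x₁ ∧ 0 < x₂ ∧ 0 < x₃ ∧
      x₁ - β₁ * x₂ - γ₁ * x₃ = 1 ∧
      x₂ - β₂ * x₃ - γ₂ * x₁ = 1 ∧
      x₃ - β₃ * x₁ - γ₃ * x₂ = 1 := by
    rintro ⟨x₁, x₂, x₃, hx₁, hx₂, hx₃, hsys⟩
    have hsol := (lv3Matrix_mulVec_eq_one_iff β₁ β₂ β₃ γ₁ γ₂ γ₃ x₁ x₂ x₃).2 hsys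
    have hsign₁ := sign_cramer_eq_sign_det hsol (i := 0) hx₁
    have hsign₃ := sign_cramer_eq_sign_det hsol (i := 2) hx₃
    rw [lv3Matrix_cramer_one_zero, sign_neg h1] at hsign₁
    rw [lv3Matrix_cramer_one_two, sign_pos h2, ← hsign₁] at hsign₃
    exact absurd hsign₃ (by decide)
  refine ⟨linear, fun α₁ α₂ α₃ hα₁ hα₂ hα₃ ⟨x, hx₁, hx₂, hx₃, heq⟩ => linear ?_⟩
  exact ⟨x.1, x.2.1, x.2.2, hx₁, hx₂, hx₃,
    (lv3_eq_zero_iff hα₁.ne' hα₂.ne' hα₃.ne' β₁ β₂ β₃ γ₁ γ₂ γ₃ hx₁.ne' hx₂.ne' hx₃.ne').1 heq⟩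
end
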